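/- arXiv:2409.00832 — 6 statements merged into one kernel-verified Lean document; each statement's English description precedes it below -/
import Mathlib

section
/- For every integer n ≥ 1, every integer m ≥ 2, and every vector (μ_1,…,μ_n) of integers with μ_i ≥ m for all i, there exists an ordinal game with strict unilateral deviations, agent set {1,…,n}, and action sets of sizes |A_i| = μ_i, that has no satisficing equilibrium with respect to (m − ⌈m/n⌉, …, m − ⌈m/n⌉); that is, at every action profile at least one agent fails to be (m − ⌈m/n⌉)-satisficed. -/
/-!
Statement 0: For every n ≥ 1, m ≥ 2, and action-set sizes μ_i ≥ m, there is an ordinal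
game with strict unilateral deviations, agent set Fin n and action sets Fin (μ i),
having no satisficing equilibrium with respect to (m − ⌈m/n⌉, …, m − ⌈m/n⌉).
-/

namespace Stmt0

/-- Action profiles of a game with agents `Fin n` and action sets `Fin (μ i)`. -/
abbrev Profile (n : ℕ) (μ : Fin n → ℕ) := (i : Fin n) → Fin (μ i)

/-- Strict part of agent `i`'s preference relation. -/
def strictPref {n : ℕ} {μ : Fin n → ℕ}
    (pref : (i : Fin n) → Profile n μ → Profile n μ → Prop)
    (i : Fin n) (a b : Profile n μ) : Prop :=
  pref i a b ∧ ¬ pref i b a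

/-- `rank_i(a | ⪰_i) = 1 + |{x ∈ A_i : (x, a_{-i}) ≻_i (a_i, a_{-i})}|`. -/
noncomputable def rank {n : ℕ} {μ : Fin n → ℕ}
    (pref : (i : Fin n) → Profile n μ → Profile n μ → Prop)
    (i : Fin n) (a : Profile n μ) : ℕ :=
  1 + Nat.card {x : Fin (μ i) // strictPref pref i (Function.update a i x) a}

/-!
Agent `i` ranks its first `m` actions cyclically: action `x` costs
`(x + ∑_{j ≠ i} a_j - c i) mod m`, where `c = ⌈m/n⌉`, and every further action costs more than
all of these. At a profile `a` agent `i` therefore has at least `(∑_j a_j - c i) mod m` strictly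
better deviations. The shifts `c i`, `0 ≤ i < n`, walk around the residues mod `m` in steps of
`c` and, as `n c ≥ m`, cannot jump over the window `[m - c, m)`; so some agent's residue lies
in it, and that agent is not `(m - c)`-satisficed.
-/

open Function Finset

lemma lt_rank_of_injective {n : ℕ} {μ : Fin n → ℕ}
    (pref : (i : Fin n) → Profile n μ → Profile n μ → Prop) {i : Fin n} {a : Profile n μ}
    {k : ℕ} (g : Fin k → Fin (μ i)) (hg : Injective g)
    (hbetter : ∀ y, strictPref pref i (update a i (g y)) a) : k < rank pref i a := by
  have := Nat.card_le_card_of_injective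
    (fun y => (⟨g y, hbetter y⟩ : {x : Fin (μ i) // strictPref pref i (update a i x) a}))
    (fun y y' h => hg (congrArg Subtype.val h))
  simp only [Nat.card_eq_fintype_card, Fintype.card_fin] at this
  rw [rank]
  omega

section CostPreference

variable {n : ℕ} {μ : Fin n → ℕ} {α : Type*} [LinearOrder α]

def costPref (u : (i : Fin n) → Profile n μ → α) (i : Fin n) (a b : Profile n μ) : Prop :=
  u i a ≤ u i b

variable {u : (i : Fin n) → Profile n μ → α} {i : Fin n}

lemma strictPref_costPref_iff {a b : Profile n μ} :
    strictPref (costPref u) i a b ↔ u i a < u i b :=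
  lt_iff_le_not_ge.symm

lemma strictPref_costPref_update_or {a : Profile n μ} (hu : Injective fun x => u i (update a i x))
    {x x' : Fin (μ i)} (hxx' : x ≠ x') :
    strictPref (costPref u) i (update a i x) (update a i x') ∨
      strictPref (costPref u) i (update a i x') (update a i x) := by
  simp only [strictPref_costPref_iff]
  exact lt_or_gt_of_ne (hu.ne hxx')

end CostPreference

section CyclicGame

variable {n : ℕ} {μ : Fin n → ℕ} (m c : ℕ)

def offset (i : Fin n) (a : Profile n μ) : ℤ :=
  ∑ j ∈ univ.erase i, ((a j : ℕ) : ℤ) - c * i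

def cyclicCost (i : Fin n) (a : Profile n μ) : ℤ :=
  if (a i : ℕ) < m then ((a i : ℕ) + offset c i a) % m else (a i : ℕ)

variable {m c} {i : Fin n} {a : Profile n μ}

lemma offset_update_self (x : Fin (μ i)) : offset c i (update a i x) = offset c i a := by
  refine congrArg (· - _) (sum_congr rfl fun j hj => ?_)
  rw [update_of_ne (ne_of_mem_erase hj)]

lemma cyclicCost_update (x : Fin (μ i)) :
    cyclicCost m c i (update a i x) =
      if (x : ℕ) < m then ((x : ℕ) + offset c i a) % m else (x : ℕ) := by
  simp only [cyclicCost, update_self, offset_update_self]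

lemma self_add_offset : ((a i : ℕ) : ℤ) + offset c i a = ∑ j, ((a j : ℕ) : ℤ) - c * i := by
  rw [offset, ← add_sub_assoc, add_sum_erase univ (fun j => ((a j : ℕ) : ℤ)) (mem_univ i)]

lemma cyclicCost_update_injective :
    Injective fun x : Fin (μ i) => cyclicCost m c i (update a i x) := by
  intro x x' h
  have hx := Int.emod_lt_of_pos ((x : ℕ) + offset c i a) (b := m)
  have hx' := Int.emod_lt_of_pos ((x' : ℕ) + offset c i a) (b := m)
  simp only [cyclicCost_update] at h
  split_ifs at h with hxm hxm'
  · have hmod : ((x : ℕ) : ℤ) % m = ((x' : ℕ) : ℤ) % m := Int.ModEq.add_right_cancel' _ h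
    rw [Int.emod_eq_of_lt (by omega) (by omega), Int.emod_eq_of_lt (by omega) (by omega)] at hmod
    exact Fin.ext (by exact_mod_cast hmod)
  · omega
  · omega
  · exact Fin.ext (by exact_mod_cast h)

lemma emod_le_cyclicCost (hm : 0 < m) :
    (∑ j, ((a j : ℕ) : ℤ) - c * i) % m ≤ cyclicCost m c i a := by
  rw [cyclicCost, self_add_offset]
  split_ifs with hi
  · exact le_rfl
  · have := Int.emod_lt_of_pos (∑ j, ((a j : ℕ) : ℤ) - c * i) (b := m) (by omega)
    omega

lemma exists_cyclicCost_update_eq (hμ : m ≤ μ i) {w : ℤ} (hw0 : 0 ≤ w) (hwm : w < m) :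
    ∃ x : Fin (μ i), cyclicCost m c i (update a i x) = w := by
  have hm : (0 : ℤ) < m := by omega
  have h0 := Int.emod_nonneg (w - offset c i a) hm.ne'
  have hlt := Int.emod_lt_of_pos (w - offset c i a) hm
  refine ⟨⟨((w - offset c i a) % m).toNat, by omega⟩, ?_⟩
  rw [cyclicCost_update, Fin.val_mk, if_pos (by omega), Int.toNat_of_nonneg h0, Int.emod_add_emod,
    sub_add_cancel, Int.emod_eq_of_lt hw0 hwm]

lemma lt_rank_of_le_cyclicCost (hμ : m ≤ μ i) {k : ℕ} (hkm : k ≤ m)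
    (hk : (k : ℤ) ≤ cyclicCost m c i a) : k < rank (costPref (cyclicCost m c)) i a := by
  choose g hg using fun y : Fin k =>
    exists_cyclicCost_update_eq (a := a) (c := c) hμ (w := y) (by omega) (by omega)
  refine lt_rank_of_injective _ g (fun y y' h => ?_) fun y => ?_
  · have : (y : ℤ) = y' := by rw [← hg y, ← hg y', h]
    exact Fin.ext (by exact_mod_cast this)
  · rw [strictPref_costPref_iff, hg y]
    omega

end CyclicGame

lemma exists_sub_le_emod_sub_mul {n m c : ℕ} (hm : 0 < m) (hmc : m ≤ n * c) (S : ℤ) :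
    ∃ i : Fin n, (m : ℤ) - c ≤ (S - c * i) % m := by
  have hm' : (0 : ℤ) < m := by exact_mod_cast hm
  have hmc' : (m : ℤ) ≤ n * c := by exact_mod_cast hmc
  simp_rw [← Int.emod_sub_emod S]
  set s := S % m
  have hs0 : 0 ≤ s := Int.emod_nonneg _ hm'.ne'
  have hsm : s < m := Int.emod_lt_of_pos _ hm'
  by_cases hs : (m : ℤ) - c ≤ s
  · refine ⟨⟨0, Nat.pos_of_ne_zero (by rintro rfl; omega)⟩, ?_⟩
    simpa [Int.emod_eq_of_lt hs0 hsm] using hs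
  · -- With `i = ⌊s / c⌋ + 1` the difference `s - c i` lies in `[-c, 0)`.
    have hc : (0 : ℤ) < c := by nlinarith
    set q := s / c
    set r := s % c
    have hr0 : 0 ≤ r := Int.emod_nonneg _ hc.ne'
    have hrc : r < c := Int.emod_lt_of_pos _ hc
    have hs_eq : s = c * q + r := (Int.mul_ediv_add_emod s c).symm
    have hq0 : 0 ≤ q := Int.ediv_nonneg hs0 hc.le
    have hqn : q + 1 < n := by nlinarith
    refine ⟨⟨q.toNat + 1, by omega⟩, ?_⟩
    have hcast : ((q.toNat + 1 : ℕ) : ℤ) = q + 1 := by omega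
    rw [hcast, show s - c * (q + 1) = r - c + m + m * (-1) by rw [hs_eq]; ring,
      Int.add_mul_emod_self_left, Int.emod_eq_of_lt (by omega) (by omega)]
    omega

theorem stmt0 (n m : ℕ) (hn : 1 ≤ n) (hm : 2 ≤ m) (μ : Fin n → ℕ) (hμ : ∀ i, m ≤ μ i) :
    ∃ pref : (i : Fin n) → Profile n μ → Profile n μ → Prop,
      -- each ⪰_i is a total preorder
      (∀ i a b, pref i a b ∨ pref i b a) ∧
      (∀ i a b c, pref i a b → pref i b c → pref i a c) ∧
      -- strict unilateral deviations
      (∀ (i : Fin n) (a : Profile n μ) (x x' : Fin (μ i)), x ≠ x' →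
        (strictPref pref i (Function.update a i x) (Function.update a i x') ∨
          strictPref pref i (Function.update a i x') (Function.update a i x))) ∧
      -- no (m − ⌈m/n⌉, …, m − ⌈m/n⌉)-satisficing equilibrium: at every profile some
      -- agent fails to be (m − ⌈m/n⌉)-satisficed
      (∀ a : Profile n μ, ∃ i : Fin n, ¬ rank pref i a ≤ m - (m + n - 1) / n) := by
  have hm0 : 0 < m := by omega
  have hmc : m ≤ n * ((m + n - 1) / n) := by
    have := Nat.lt_div_mul_add (a := m + n - 1) hn
    rw [mul_comm]
    omega
  set c := (m + n - 1) / n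
  refine ⟨costPref (cyclicCost m c), fun i a b => le_total _ _, fun i a b d => le_trans,
    fun i a x x' => strictPref_costPref_update_or cyclicCost_update_injective, fun a => ?_⟩
  obtain ⟨i, hle⟩ := exists_sub_le_emod_sub_mul hm0 hmc (∑ j, ((a j : ℕ) : ℤ))
  refine ⟨i, not_le.2 (lt_rank_of_le_cyclicCost (hμ i) (Nat.sub_le m c) ?_)⟩
  have hcost := emod_le_cyclicCost (a := a) (c := c) (i := i) hm0
  have hnonneg := Int.emod_nonneg (∑ j, ((a j : ℕ) : ℤ) - c * i) (b := m) (by omega)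
  omega

end Stmt0
end

section
/- Every k-approximate potential game possesses a k-satisficing equilibrium: if a finite ordinal game (N, A, ⪰) is a k-approximate potential game for positive integers k = (k_i)_{i∈N}, then there exists an action profile a ∈ 𝒜 at which every agent i is k_i-satisficed. -/
namespace Stmt3

/-- Action profiles of a game with agents `Fin n` and action sets `Fin (m i)`. -/
abbrev Profile (n : ℕ) (m : Fin n → ℕ) := (i : Fin n) → Fin (m i)

/-- Strict part of a binary relation. -/
def strictRel {α : Sort*} (r : α → α → Prop) (a b : α) : Prop := r a b ∧ ¬ r b a

/-- `rank_i(a | ⪰_i) = 1 + |{x ∈ A_i : (x, a_{-i}) ≻_i (a_i, a_{-i})}|`. -/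
noncomputable def rankPref {n : ℕ} {m : Fin n → ℕ}
    (pref : (i : Fin n) → Profile n m → Profile n m → Prop)
    (i : Fin n) (a : Profile n m) : ℕ :=
  1 + Nat.card {x : Fin (m i) // strictRel (pref i) (Function.update a i x) a}

/-- `rank_i(a | ⊵) = 1 + |{x ∈ A_i : (x, a_{-i}) ⊳ a}|` for a preorder `⊵` on profiles. -/
noncomputable def rankPot {n : ℕ} {m : Fin n → ℕ}
    (pot : Profile n m → Profile n m → Prop)
    (i : Fin n) (a : Profile n m) : ℕ :=
  1 + Nat.card {x : Fin (m i) // strictRel pot (Function.update a i x) a}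

/-!
A `⊵`-maximal profile exists by finiteness. At it no agent has a strictly `⊵`-better deviation,
so every potential rank is `1`. The approximation bound
`rank_i(a | ⪰_i) - 1 < k_i` then says exactly that every agent is `k_i`-satisficed there.
-/

section StrictRel

variable {α : Type*} {r : α → α → Prop}

theorem strictRel_irrefl (a : α) : ¬ strictRel r a a := fun h => h.2 h.1

theorem strictRel_trans (hr : ∀ a b c, r a b → r b c → r a c) {a b c : α}
    (hab : strictRel r a b) (hbc : strictRel r b c) : strictRel r a c :=
  ⟨hr a b c hab.1 hbc.1, fun hca => hbc.2 (hr c a b hca hab.1)⟩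

theorem wellFounded_strictRel [Finite α] (hr : ∀ a b c, r a b → r b c → r a c) :
    WellFounded (strictRel r) :=
  haveI : IsTrans α (strictRel r) := ⟨fun _ _ _ => strictRel_trans hr⟩
  haveI : Std.Irrefl (strictRel r) := ⟨strictRel_irrefl⟩
  Finite.wellFounded_of_trans_of_irrefl _

theorem exists_forall_not_strictRel [Finite α] [Nonempty α]
    (hr : ∀ a b c, r a b → r b c → r a c) : ∃ a, ∀ b, ¬ strictRel r b a := by
  obtain ⟨a, -, ha⟩ := (wellFounded_strictRel hr).has_min Set.univ Set.univ_nonempty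
  exact ⟨a, fun b => ha b (Set.mem_univ b)⟩

end StrictRel

theorem rankPot_eq_one_of_forall_not_strictRel {n : ℕ} {m : Fin n → ℕ}
    {pot : Profile n m → Profile n m → Prop} {a : Profile n m}
    (ha : ∀ b, ¬ strictRel pot b a) (i : Fin n) : rankPot pot i a = 1 := by
  have : IsEmpty {x : Fin (m i) // strictRel pot (Function.update a i x) a} :=
    ⟨fun x => ha _ x.2⟩
  simp [rankPot, Nat.card_of_isEmpty]

theorem stmt3_general (n : ℕ) (m : Fin n → ℕ) (hm : ∀ i, 2 ≤ m i)
    (pref : (i : Fin n) → Profile n m → Profile n m → Prop)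
    (k : Fin n → ℕ)
    -- the game is a k-approximate potential game, with witnessing preorder `pot`
    (pot : Profile n m → Profile n m → Prop)
    (hpottrans : ∀ a b c, pot a b → pot b c → pot a c)
    (happrox : ∀ (i : Fin n) (a : Profile n m),
      (rankPref pref i a : ℤ) - (rankPot pot i a : ℤ) < (k i : ℤ)) :
    -- there is a profile at which every agent i is k_i-satisficed
    ∃ a : Profile n m, ∀ i : Fin n, rankPref pref i a ≤ k i := by
  have : Nonempty (Profile n m) := ⟨fun i => ⟨0, by have := hm i; omega⟩⟩
  obtain ⟨a, ha⟩ := exists_forall_not_strictRel hpottrans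
  refine ⟨a, fun i => ?_⟩
  have hbound := happrox i a
  rw [rankPot_eq_one_of_forall_not_strictRel ha i] at hbound
  omega

theorem stmt3 (n : ℕ) (hn : 1 ≤ n) (m : Fin n → ℕ) (hm : ∀ i, 2 ≤ m i)
    (pref : (i : Fin n) → Profile n m → Profile n m → Prop)
    -- each ⪰_i is a total preorder
    (htotal : ∀ i a b, pref i a b ∨ pref i b a)
    (htrans : ∀ i a b c, pref i a b → pref i b c → pref i a c)
    (k : Fin n → ℕ) (hk : ∀ i, 1 ≤ k i)
    -- the game is a k-approximate potential game, with witnessing preorder `pot`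
    (pot : Profile n m → Profile n m → Prop)
    (hrefl : ∀ a, pot a a)
    (hpottrans : ∀ a b c, pot a b → pot b c → pot a c)
    (happrox : ∀ (i : Fin n) (a : Profile n m),
      (rankPref pref i a : ℤ) - (rankPot pot i a : ℤ) < (k i : ℤ)) :
    -- there is a profile at which every agent i is k_i-satisficed
    ∃ a : Profile n m, ∀ i : Fin n, rankPref pref i a ≤ k i :=
  stmt3_general n m hm pref k pot hpottrans happrox

end Stmt3
end

section
/- For any integers n ≥ 1, m ≥ 2, and k ≥ 1, a solution φ on Γ_{n,m} satisfies one-person k-satisficing behavior, consistency, and converse consistency if and only if φ(g) equals the set of (k,…,k)-satisficing equilibria of g for every game g ∈ Γ_{n,m}. -/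
namespace Solutions

/-- A game with agent set `N ⊆ Fin n` (so at most `n` agents) and action set
`A i ⊆ Fin m` (so at most `m` actions) for each agent `i ∈ N`, together with a
total preorder (preference relation) for each agent on the set of action profiles. -/
structure Game (n m : ℕ) where
  N : Finset (Fin n)
  Nne : N.Nonempty
  A : Fin n → Finset (Fin m)
  Atwo : ∀ i ∈ N, 2 ≤ (A i).card
  pref : (i : N) → ((j : N) → A j.1) → ((j : N) → A j.1) → Prop
  total : ∀ i a b, pref i a b ∨ pref i b a
  trans : ∀ i a b c, pref i a b → pref i b c → pref i a c

variable {n m : ℕ}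

/-- The set of action profiles of `g`. -/
abbrev Game.Prof (g : Game n m) := (j : g.N) → g.A j.1

/-- Strict part `≻_i` of agent `i`'s preference relation. -/
def Game.strict (g : Game n m) (i : g.N) (a b : g.Prof) : Prop :=
  g.pref i a b ∧ ¬ g.pref i b a

/-- `rank_i(a | ⪰_i) = 1 + |{x ∈ A_i : (x, a_{-i}) ≻_i (a_i, a_{-i})}|`. -/
noncomputable def Game.rank (g : Game n m) (i : g.N) (a : g.Prof) : ℕ :=
  1 + Nat.card {x : g.A i.1 // g.strict i (Function.update a i x) a}

/-- The game has strict preferences over unilateral deviations. -/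
def Game.StrictUD (g : Game n m) : Prop :=
  ∀ (i : g.N) (a : g.Prof) (x x' : g.A i.1), x ≠ x' →
    (g.strict i (Function.update a i x) (Function.update a i x') ∨
      g.strict i (Function.update a i x') (Function.update a i x))

/-- Extend a profile of the agents in `S` to a profile of `g` by fixing every agent
`j ∉ S` to the action `a j`. -/
def Game.extend (g : Game n m) (S : Finset (Fin n)) (a : g.Prof)
    (b : (j : S) → g.A j.1) : g.Prof :=
  fun j => if h : j.1 ∈ S then b ⟨j.1, h⟩ else a j

/-- The reduced game `g^{S,a}`: agents in `S` play the residual game obtained from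
`g` by fixing each agent `j ∈ N ∖ S` to the action `a j`. -/
def Game.sub (g : Game n m) (S : Finset (Fin n)) (hne : S.Nonempty) (hS : S ⊆ g.N)
    (a : g.Prof) : Game n m where
  N := S
  Nne := hne
  A := g.A
  Atwo := fun i hi => g.Atwo i (hS hi)
  pref := fun i b b' => g.pref ⟨i.1, hS i.2⟩ (g.extend S a b) (g.extend S a b')
  total := fun i b b' => g.total ⟨i.1, hS i.2⟩ _ _
  trans := fun i b b' b'' h h' => g.trans ⟨i.1, hS i.2⟩ _ _ _ h h'

/-- The restriction `a_S` of a profile `a` of `g` to the agents in `S`. -/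
def Game.restrict (g : Game n m) (S : Finset (Fin n)) (hS : S ⊆ g.N) (a : g.Prof) :
    (j : S) → g.A j.1 :=
  fun j => a ⟨j.1, hS j.2⟩

/-- The set of `(k,…,k)`-satisficing equilibria of `g`. -/
def SAT (k : ℕ) (g : Game n m) : Set g.Prof := {a | ∀ i : g.N, g.rank i a ≤ k}

/-- One-person `k`-satisficing behavior: in every single-agent game (in `Γ_{n,m}`,
i.e. with strict unilateral deviations), the solution is the set of profiles at
which the agent is `k`-satisficed. -/
def OnePersonSat (k : ℕ) (φ : (g : Game n m) → Set g.Prof) : Prop :=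
  ∀ g : Game n m, g.StrictUD → g.N.card = 1 →
    φ g = {a : g.Prof | ∀ i : g.N, g.rank i a ≤ k}

/-- Consistency: if `a` is in the solution of `g`, then for every nonempty proper
subset `S` of the agents, `a_S` is in the solution of `g^{S,a}`. -/
def Consistent (φ : (g : Game n m) → Set g.Prof) : Prop :=
  ∀ g : Game n m, g.StrictUD → ∀ a ∈ φ g,
    ∀ (S : Finset (Fin n)) (hne : S.Nonempty) (hS : S ⊆ g.N), S ≠ g.N →
      g.restrict S hS a ∈ φ (g.sub S hne hS a)

/-- Converse consistency: if (in a game with at least two agents) `a_S` is in the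
solution of `g^{S,a}` for every nonempty proper subset `S` of the agents, then `a`
is in the solution of `g`. -/
def ConvConsistent (φ : (g : Game n m) → Set g.Prof) : Prop :=
  ∀ g : Game n m, g.StrictUD → 2 ≤ g.N.card → ∀ a : g.Prof,
    (∀ (S : Finset (Fin n)) (hne : S.Nonempty) (hS : S ⊆ g.N), S ≠ g.N →
      g.restrict S hS a ∈ φ (g.sub S hne hS a)) → a ∈ φ g

/-! Reducing `g` to a coalition `S` while fixing the others at `a` leaves every member's
rank at `a` unchanged. Hence membership of `a` in `SAT k g` is decided agent by agent on
the one-agent reductions, which makes `SAT k` consistent and conversely consistent.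
Conversely, let `φ` satisfy the three axioms and induct on the number of agents: consistency
together with one-person behaviour on the one-agent reductions gives `φ g ⊆ SAT k g`, and
converse consistency together with the induction hypothesis on all proper reductions gives
`SAT k g ⊆ φ g`. -/

namespace Game

variable (g : Game n m)

lemma extend_restrict (S : Finset (Fin n)) (hS : S ⊆ g.N) (a : g.Prof) :
    g.extend S a (g.restrict S hS a) = a := by
  funext j
  unfold Game.extend Game.restrict
  split <;> rfl

lemma extend_update (S : Finset (Fin n)) (hS : S ⊆ g.N) (a : g.Prof)
    (b : (j : S) → g.A j.1) (i : S) (x : g.A i.1) :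
    g.extend S a (Function.update b i x) =
      Function.update (g.extend S a b) ⟨i.1, hS i.2⟩ x := by
  funext j
  by_cases hj : j = ⟨i.1, hS i.2⟩
  · subst hj
    simp only [Game.extend, dif_pos i.2, Function.update_self]
  · rw [Function.update_of_ne hj]
    unfold Game.extend
    split_ifs
    · rw [Function.update_of_ne]
      exact fun he => hj (Subtype.ext (congrArg Subtype.val he :))
    · rfl

lemma rank_sub_restrict (S : Finset (Fin n)) (hne : S.Nonempty) (hS : S ⊆ g.N)
    (a : g.Prof) (i : S) :
    (g.sub S hne hS a).rank i (g.restrict S hS a) = g.rank ⟨i.1, hS i.2⟩ a := by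
  unfold Game.rank
  congr 1
  refine Nat.card_congr (Equiv.subtypeEquivRight fun x => ?_)
  show g.strict ⟨i.1, hS i.2⟩ (g.extend S a (Function.update (g.restrict S hS a) i x))
    (g.extend S a (g.restrict S hS a)) ↔ _
  erw [extend_update, extend_restrict]

variable {g}

lemma StrictUD.sub (hg : g.StrictUD) (S : Finset (Fin n)) (hne : S.Nonempty)
    (hS : S ⊆ g.N) (a : g.Prof) : (g.sub S hne hS a).StrictUD := by
  intro i b x x' hxx'
  show g.strict ⟨i.1, hS i.2⟩ (g.extend S a (Function.update b i x))
        (g.extend S a (Function.update b i x')) ∨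
      g.strict ⟨i.1, hS i.2⟩ (g.extend S a (Function.update b i x'))
        (g.extend S a (Function.update b i x))
  erw [extend_update, extend_update]
  exact hg ⟨i.1, hS i.2⟩ (g.extend S a b) x x' hxx'

lemma singleton_ne_N (h2 : 2 ≤ g.N.card) (i : Fin n) : {i} ≠ g.N := by
  rintro hN
  rw [← hN, Finset.card_singleton] at h2
  omega

end Game

open Game

variable {k : ℕ} {φ : (g : Game n m) → Set g.Prof}

lemma restrict_mem_SAT_sub_iff (g : Game n m) (S : Finset (Fin n)) (hne : S.Nonempty)
    (hS : S ⊆ g.N) (a : g.Prof) :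
    g.restrict S hS a ∈ SAT k (g.sub S hne hS a) ↔ ∀ i : S, g.rank ⟨i.1, hS i.2⟩ a ≤ k :=
  forall_congr' fun i => by erw [rank_sub_restrict]

lemma restrict_mem_SAT_sub {g : Game n m} {a : g.Prof} (ha : a ∈ SAT k g)
    (S : Finset (Fin n)) (hne : S.Nonempty) (hS : S ⊆ g.N) :
    g.restrict S hS a ∈ SAT k (g.sub S hne hS a) :=
  (restrict_mem_SAT_sub_iff g S hne hS a).2 fun _ => ha _

lemma mem_SAT_of_forall_restrict_singleton {g : Game n m} {a : g.Prof}
    (h : ∀ (i : g.N) (hne : ({i.1} : Finset (Fin n)).Nonempty) (hS : {i.1} ⊆ g.N),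
      g.restrict {i.1} hS a ∈ SAT k (g.sub {i.1} hne hS a)) :
    a ∈ SAT k g := fun i =>
  (restrict_mem_SAT_sub_iff g _ _ _ a).1 (h i (Finset.singleton_nonempty _)
    (Finset.singleton_subset_iff.2 i.2)) ⟨i.1, Finset.mem_singleton_self _⟩

lemma onePersonSat_of_eq_SAT (hφ : ∀ g : Game n m, g.StrictUD → φ g = SAT k g) :
    OnePersonSat k φ :=
  fun g hg _ => hφ g hg

lemma consistent_of_eq_SAT (hφ : ∀ g : Game n m, g.StrictUD → φ g = SAT k g) :
    Consistent φ := by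
  intro g hg a ha S hne hS _
  rw [hφ g hg] at ha
  rw [hφ _ (hg.sub S hne hS a)]
  exact restrict_mem_SAT_sub ha S hne hS

lemma convConsistent_of_eq_SAT (hφ : ∀ g : Game n m, g.StrictUD → φ g = SAT k g) :
    ConvConsistent φ := by
  intro g hg h2 a hred
  rw [hφ g hg]
  refine mem_SAT_of_forall_restrict_singleton fun i hne hS => ?_
  rw [← hφ _ (hg.sub _ hne hS a)]
  exact hred _ hne hS (singleton_ne_N h2 i)

lemma subset_SAT_of_consistent (h1 : OnePersonSat k φ) (h2 : Consistent φ) {g : Game n m}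
    (hg : g.StrictUD) (hN : 2 ≤ g.N.card) : φ g ⊆ SAT k g := by
  intro a ha
  refine mem_SAT_of_forall_restrict_singleton fun i hne hS => ?_
  have hred := h2 g hg a ha _ hne hS (singleton_ne_N hN i)
  rwa [h1 _ (hg.sub _ hne hS a) (Finset.card_singleton _)] at hred

lemma SAT_subset_of_convConsistent (h3 : ConvConsistent φ) {g : Game n m}
    (hg : g.StrictUD) (hN : 2 ≤ g.N.card)
    (ih : ∀ g' : Game n m, g'.StrictUD → g'.N.card < g.N.card → φ g' = SAT k g') :
    SAT k g ⊆ φ g := by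
  intro a ha
  refine h3 g hg hN a fun S hne hS hSN => ?_
  rw [ih _ (hg.sub S hne hS a) (Finset.card_lt_card (hS.ssubset_of_ne hSN))]
  exact restrict_mem_SAT_sub ha S hne hS

lemma eq_SAT_of_axioms (h1 : OnePersonSat k φ) (h2 : Consistent φ) (h3 : ConvConsistent φ)
    (g : Game n m) (hg : g.StrictUD) : φ g = SAT k g := by
  induction hc : g.N.card using Nat.strong_induction_on generalizing g with
  | _ c ih =>
    rcases (Nat.one_le_iff_ne_zero.2 g.Nne.card_pos.ne').eq_or_lt with hone | hN
    · exact h1 g hg hone.symm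
    · subst hc
      exact (subset_SAT_of_consistent h1 h2 hg hN).antisymm
        (SAT_subset_of_convConsistent h3 hg hN fun g' hg' hlt => ih _ hlt g' hg' rfl)

theorem stmt5_general (k : ℕ)
    (φ : (g : Game n m) → Set g.Prof) :
    (OnePersonSat k φ ∧ Consistent φ ∧ ConvConsistent φ) ↔
      ∀ g : Game n m, g.StrictUD → φ g = SAT k g :=
  ⟨fun ⟨h1, h2, h3⟩ => eq_SAT_of_axioms h1 h2 h3,
    fun hφ => ⟨onePersonSat_of_eq_SAT hφ, consistent_of_eq_SAT hφ, convConsistent_of_eq_SAT hφ⟩⟩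

/-- a solution `φ` on `Γ_{n,m}` satisfies one-person `k`-satisficing
behavior, consistency, and converse consistency iff `φ(g)` is the set of
`(k,…,k)`-satisficing equilibria of `g` for every `g ∈ Γ_{n,m}`. -/
theorem stmt5 (hn : 1 ≤ n) (hm : 2 ≤ m) (k : ℕ) (hk : 1 ≤ k)
    (φ : (g : Game n m) → Set g.Prof) :
    (OnePersonSat k φ ∧ Consistent φ ∧ ConvConsistent φ) ↔
      ∀ g : Game n m, g.StrictUD → φ g = SAT k g :=
  stmt5_general k φ

end Solutions
end

section
/- Let G be a game drawn uniformly at random from G_{n,m}, and fix S ⊆ {1,…,n}, 0 ≤ d ≤ |S|, and an integer k ≥ 1. Then for every action profile a, E[χ_a] = ζ({1,…,n}, d, S, k) = (∏_{i=1}^n 1/m_i) · ψ(d,S,k), and consequently E[N(d,S,k)] = Σ_{a∈𝒜} E[χ_a] = ψ(d,S,k). -/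
open scoped Classical

namespace RandomGames

/-- Action profiles of a game with agent set `Fin n` and action sets `Fin (m i)`. -/
abbrev Profile (n : ℕ) (m : Fin n → ℕ) := (i : Fin n) → Fin (m i)

/-- A game in `G_{n,m}`: agent set `Fin n`, action sets `Fin (m i)`, and each
agent's preference relation a strict linear order (total, transitive,
antisymmetric) on the set of action profiles. -/
structure LinGame (n : ℕ) (m : Fin n → ℕ) where
  pref : Fin n → Profile n m → Profile n m → Prop
  total : ∀ i a b, pref i a b ∨ pref i b a
  trans : ∀ i a b c, pref i a b → pref i b c → pref i a c
  antisymm : ∀ i a b, pref i a b → pref i b a → a = b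

variable {n : ℕ} {m : Fin n → ℕ}

/-- Strict part `≻_i` of agent `i`'s preference relation. -/
def LinGame.strict (g : LinGame n m) (i : Fin n) (a b : Profile n m) : Prop :=
  g.pref i a b ∧ ¬ g.pref i b a

/-- `rank_i(a | ⪰_i) = 1 + |{x ∈ A_i : (x, a_{-i}) ≻_i (a_i, a_{-i})}|`. -/
noncomputable def LinGame.rank (g : LinGame n m) (i : Fin n) (a : Profile n m) : ℕ :=
  1 + Nat.card {x : Fin (m i) // g.strict i (Function.update a i x) a}

/-- The profile-condition `Q(d,S,k)` holds at `a`: the set `D` of agents that are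
not 1-satisficed at `a` satisfies `D ⊆ S`, `|D| ≤ d`, and every agent in `D` is
`k`-satisficed at `a`. -/
def Qcond (g : LinGame n m) (d : ℕ) (S : Finset (Fin n)) (k : ℕ)
    (a : Profile n m) : Prop :=
  (∀ i : Fin n, g.rank i a ≠ 1 → i ∈ S ∧ g.rank i a ≤ k) ∧
    Nat.card {i : Fin n // g.rank i a ≠ 1} ≤ d

/-- Property `P^z(d,S,k)`: `Q(d,S,k)` holds at at least `z` action profiles. -/
def Pz (z d : ℕ) (S : Finset (Fin n)) (k : ℕ) (g : LinGame n m) : Prop :=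
  z ≤ Nat.card {a : Profile n m // Qcond g d S k a}

/-- `γ_{n,m}(P)`: the fraction of games in `G_{n,m}` satisfying `P`. -/
noncomputable def gamma (n : ℕ) (m : Fin n → ℕ) (P : LinGame n m → Prop) : ℝ :=
  (Nat.card {g : LinGame n m // P g} : ℝ) / (Nat.card (LinGame n m) : ℝ)

/-- `ψ(d,S,k) = Σ_{T ⊆ S, |T| ≤ d} ∏_{i∈T} (min{k, m_i} − 1)`. -/
def psi (m : Fin n → ℕ) (d : ℕ) (S : Finset (Fin n)) (k : ℕ) : ℕ :=
  ∑ T ∈ S.powerset.filter (fun T => T.card ≤ d), ∏ i ∈ T, (min k (m i) - 1)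

/-- `δ_{n,m} = (∏_i m_i) / max_i m_i`. -/
noncomputable def deltanm (n : ℕ) (m : Fin n → ℕ) : ℝ :=
  (∏ i, (m i : ℝ)) / ((Finset.univ.sup m : ℕ) : ℝ)

/-- `Pr[Poisson(λ) ≥ z]`, the upper tail of a Poisson distribution with mean `λ`. -/
noncomputable def poissonTail (lam : ℝ) (z : ℕ) : ℝ :=
  ∑' j : ℕ, if z ≤ j then Real.exp (-lam) * lam ^ j / (Nat.factorial j) else 0

/-- `E[χ_a]`, the probability that `Q(d,S,k)` holds at `a` in a game drawn
uniformly at random from `G_{n,m}`. -/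
noncomputable def Echi (n : ℕ) (m : Fin n → ℕ) (d : ℕ) (S : Finset (Fin n)) (k : ℕ)
    (a : Profile n m) : ℝ :=
  (Nat.card {g : LinGame n m // Qcond g d S k a} : ℝ) / (Nat.card (LinGame n m) : ℝ)

/-- `E[χ_a · χ_{a'}]`, the probability that `Q(d,S,k)` holds at both `a` and `a'`
in a game drawn uniformly at random from `G_{n,m}`. -/
noncomputable def Echi2 (n : ℕ) (m : Fin n → ℕ) (d : ℕ) (S : Finset (Fin n)) (k : ℕ)
    (a a' : Profile n m) : ℝ :=
  (Nat.card {g : LinGame n m // Qcond g d S k a ∧ Qcond g d S k a'} : ℝ) /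
    (Nat.card (LinGame n m) : ℝ)

/-- `a' ∈ L_a`: the profiles `a` and `a'` lie on a common line (they differ in at
most one coordinate). -/
def sameLine (a a' : Profile n m) : Prop :=
  ∃ i : Fin n, ∀ j : Fin n, j ≠ i → a' j = a j

/-- `c_1(d,S,k) = Σ_{a} Σ_{a' ∈ L_a} E[χ_a]·E[χ_{a'}]`. -/
noncomputable def c1 (n : ℕ) (m : Fin n → ℕ) (d : ℕ) (S : Finset (Fin n)) (k : ℕ) : ℝ :=
  ∑ a : Profile n m, ∑ a' : Profile n m,
    if sameLine a a' then Echi n m d S k a * Echi n m d S k a' else 0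

/-- `c_2(d,S,k) = Σ_{a} Σ_{a' ∈ L_a ∖ {a}} E[χ_a · χ_{a'}]`. -/
noncomputable def c2 (n : ℕ) (m : Fin n → ℕ) (d : ℕ) (S : Finset (Fin n)) (k : ℕ) : ℝ :=
  ∑ a : Profile n m, ∑ a' : Profile n m,
    if sameLine a a' ∧ a ≠ a' then Echi2 n m d S k a a' else 0


/-!
A game in `G_{n,m}` is an `n`-tuple of independent, uniformly random linear orders on the
profiles. Agent `i`'s rank at `a` only sees the position of `a` among the `m_i` profiles of the
line through `a` in direction `i`; relabelling by a transposition of that line shows this position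
is uniform on `{0, …, m_i - 1}`. Hence the vector of ranks at `a` is uniform on `∏ i, [m_i]`, and
`Q(d,S,k)` holds exactly when it lies in a set of `ψ(d,S,k)` vectors: those supported on some
`T ⊆ S` with `|T| ≤ d` whose entries on `T` are nonzero and below `min k m_i`.
-/

open Finset

/-- The relations that can serve as one agent's preference in a `LinGame`. -/
abbrev LinearOrderRel (Y : Type*) : Type _ :=
  {r : Y → Y → Prop // (∀ a b, r a b ∨ r b a) ∧ (∀ a b c, r a b → r b c → r a c) ∧
    (∀ a b, r a b → r b a → a = b)}

namespace LinearOrderRel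

variable {Y : Type*}

noncomputable instance [Finite Y] : Fintype (LinearOrderRel Y) := Fintype.ofFinite _

instance [Finite Y] : Nonempty (LinearOrderRel Y) := by
  obtain ⟨k, ⟨e⟩⟩ := Finite.exists_equiv_fin Y
  exact ⟨⟨fun a b => e a ≤ e b, fun _ _ => le_total _ _, fun _ _ _ => le_trans,
    fun _ _ h h' => e.injective (le_antisymm h h')⟩⟩

def strict (r : LinearOrderRel Y) (a b : Y) : Prop := r.1 a b ∧ ¬ r.1 b a

lemma strict_irrefl (r : LinearOrderRel Y) (a : Y) : ¬ r.strict a a := fun h => h.2 h.1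

lemma strict_trans (r : LinearOrderRel Y) {a b c : Y} (hab : r.strict a b) (hbc : r.strict b c) :
    r.strict a c :=
  ⟨r.2.2.1 _ _ _ hab.1 hbc.1, fun hca => hab.2 (r.2.2.1 _ _ _ hbc.1 hca)⟩

lemma strict_or_strict_of_ne (r : LinearOrderRel Y) {a b : Y} (h : a ≠ b) :
    r.strict a b ∨ r.strict b a := by
  by_cases hab : r.1 a b <;> by_cases hba : r.1 b a
  · exact absurd (r.2.2.2 _ _ hab hba) h
  · exact .inl ⟨hab, hba⟩
  · exact .inr ⟨hba, hab⟩
  · exact ((r.2.1 a b).elim hab hba).elim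

def comap (r : LinearOrderRel Y) (σ : Y ≃ Y) : LinearOrderRel Y :=
  ⟨fun p q => r.1 (σ p) (σ q), fun _ _ => r.2.1 _ _, fun _ _ _ => r.2.2.1 _ _ _,
    fun _ _ h h' => σ.injective (r.2.2.2 _ _ h h')⟩

@[simp]
lemma comap_strict (r : LinearOrderRel Y) (σ : Y ≃ Y) (p q : Y) :
    (r.comap σ).strict p q ↔ r.strict (σ p) (σ q) := Iff.rfl

def comapEquiv (σ : Y ≃ Y) : LinearOrderRel Y ≃ LinearOrderRel Y where
  toFun r := r.comap σ
  invFun r := r.comap σ.symm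
  left_inv r := Subtype.ext <| by simp [comap]
  right_inv r := Subtype.ext <| by simp [comap]

variable {ι : Type*} [Fintype ι] {u : ι → Y}

noncomputable def numPreferred (r : LinearOrderRel Y) (u : ι → Y) (x : ι) : ℕ :=
  #{y | r.strict (u y) (u x)}

lemma numPreferred_lt_card (r : LinearOrderRel Y) (x : ι) :
    r.numPreferred u x < Fintype.card ι :=
  card_lt_univ_of_notMem (x := x) (by simpa using r.strict_irrefl (u x))

lemma numPreferred_lt_numPreferred (r : LinearOrderRel Y) {x y : ι} (h : r.strict (u y) (u x)) :
    r.numPreferred u y < r.numPreferred u x := by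
  refine card_lt_card ⟨fun z hz => ?_, fun hsub => ?_⟩
  · simp only [mem_filter, mem_univ, true_and] at hz ⊢
    exact r.strict_trans hz h
  · simpa using r.strict_irrefl (u y) (by simpa using hsub (by simpa using h))

lemma numPreferred_injective (r : LinearOrderRel Y) (hu : Function.Injective u) :
    Function.Injective (r.numPreferred u) := by
  intro x y hxy
  by_contra hne
  rcases r.strict_or_strict_of_ne (hu.ne hne) with h | h
  · exact (r.numPreferred_lt_numPreferred h).ne hxy
  · exact (r.numPreferred_lt_numPreferred h).ne' hxy

lemma card_filter_numPreferred_eq (r : LinearOrderRel Y) (hu : Function.Injective u) {t : ℕ}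
    (ht : t < Fintype.card ι) : #{x | r.numPreferred u x = t} = 1 := by
  let f : ι → Fin (Fintype.card ι) := fun x => ⟨r.numPreferred u x, r.numPreferred_lt_card x⟩
  have hf : Function.Bijective f :=
    (Fintype.bijective_iff_injective_and_card f).2
      ⟨fun x y h => r.numPreferred_injective hu (Fin.ext_iff.1 h), by simp⟩
  obtain ⟨x, hx⟩ := hf.2 ⟨t, ht⟩
  rw [card_eq_one]
  refine ⟨x, eq_singleton_iff_unique_mem.2 ⟨by simpa [f, Fin.ext_iff] using hx, fun y hy => ?_⟩⟩
  exact hf.1 (hx ▸ Fin.ext (by simpa using hy))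

lemma numPreferred_comap (r : LinearOrderRel Y) {σ : Y ≃ Y} {τ : ι ≃ ι}
    (hστ : ∀ y, σ (u y) = u (τ y)) (x : ι) :
    (r.comap σ).numPreferred u x = r.numPreferred u (τ x) :=
  card_equiv τ fun y => by simp [hστ]

variable [Finite Y]

lemma card_numPreferred_eq_of_injective (hu : Function.Injective u) (x x' : ι) (t : ℕ) :
    #{r : LinearOrderRel Y | r.numPreferred u x = t} =
      #{r : LinearOrderRel Y | r.numPreferred u x' = t} :=
  card_equiv (comapEquiv (Equiv.swap (u x) (u x'))) fun r => by
    simp [comapEquiv, numPreferred_comap r (hu.swap_apply x x'), Equiv.swap_apply_right]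

/-- Swapping `u x` and `u x'` shows that the fibres over all `x` have the same size, and for each
order exactly one `x` lies in the fibre. -/
theorem card_mul_card_numPreferred_eq (hu : Function.Injective u) (x : ι) {t : ℕ}
    (ht : t < Fintype.card ι) :
    Fintype.card ι * #{r : LinearOrderRel Y | r.numPreferred u x = t} =
      Fintype.card (LinearOrderRel Y) := by
  calc Fintype.card ι * #{r : LinearOrderRel Y | r.numPreferred u x = t}
      = ∑ x' : ι, #{r : LinearOrderRel Y | r.numPreferred u x' = t} := by
        rw [sum_congr rfl fun x' _ => card_numPreferred_eq_of_injective hu x' x t]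
        simp
    _ = ∑ r : LinearOrderRel Y, #{x' | r.numPreferred u x' = t} := by
        simp only [card_filter]; exact sum_comm
    _ = Fintype.card (LinearOrderRel Y) := by
        simp [card_filter_numPreferred_eq _ hu ht]

end LinearOrderRel

lemma card_filter_pi_mem_eq_sum_prod {ι β : Type*} [Fintype ι] [DecidableEq β] {α : ι → Type*}
    [∀ i, Fintype (α i)] (f : ∀ i, α i → β) (V : Finset (ι → β)) :
    #{h : ∀ i, α i | (fun i => f i (h i)) ∈ V} = ∑ v ∈ V, ∏ i, #{x | f i x = v i} := by
  rw [card_eq_sum_card_fiberwise (f := fun h i => f i (h i)) (t := V) (by simp [Set.MapsTo])]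
  refine sum_congr rfl fun v hv => ?_
  rw [← Fintype.card_piFinset]
  congr 1
  ext h
  simp only [Finset.mem_filter, mem_univ, true_and, Fintype.mem_piFinset, funext_iff]
  exact ⟨And.right, fun h' => ⟨(funext h').symm ▸ hv, h'⟩⟩

/-- Rank vectors at which `Q(d,S,k)` holds; entry `i` is `rank_i - 1`. -/
def IsAdmissibleRankVec (S : Finset (Fin n)) (d k : ℕ) (v : Fin n → ℕ) : Prop :=
  (∀ i, v i ≠ 0 → i ∈ S ∧ v i < k) ∧ #{i | v i ≠ 0} ≤ d

noncomputable def admissibleRankVecs (m : Fin n → ℕ) (S : Finset (Fin n)) (d k : ℕ) :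
    Finset (Fin n → ℕ) :=
  {v ∈ Fintype.piFinset fun i => range (m i) | IsAdmissibleRankVec S d k v}

lemma mem_admissibleRankVecs {S : Finset (Fin n)} {d k : ℕ} {v : Fin n → ℕ} :
    v ∈ admissibleRankVecs m S d k ↔ (∀ i, v i < m i) ∧ IsAdmissibleRankVec S d k v := by
  rw [admissibleRankVecs, Finset.mem_filter, Fintype.mem_piFinset]
  simp only [mem_range]

lemma filter_admissibleRankVecs_support_eq {S T : Finset (Fin n)} {d k : ℕ} (hT : T ⊆ S)
    (hTd : #T ≤ d) (hm : ∀ i, 0 < m i) :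
    {v ∈ admissibleRankVecs m S d k | ({i | v i ≠ 0} : Finset (Fin n)) = T} =
      Fintype.piFinset fun i => if i ∈ T then Ioo 0 (min k (m i)) else {0} := by
  ext v
  rw [Finset.mem_filter, mem_admissibleRankVecs, Fintype.mem_piFinset]
  constructor
  · rintro ⟨⟨hvm, hv, -⟩, rfl⟩ i
    by_cases hi : v i = 0
    · simp [hi]
    · simp [hi, Nat.pos_of_ne_zero hi, (hv i hi).2, hvm i]
  · intro hv
    have hv' : ∀ i, (i ∈ T → 0 < v i ∧ v i < k ∧ v i < m i) ∧ (i ∉ T → v i = 0) := fun i => by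
      have := hv i; split_ifs at this with hi <;> simp_all
    have hsupp : ∀ i, v i ≠ 0 ↔ i ∈ T := fun i => by
      by_cases hi : i ∈ T <;> simp [hi, (hv' i).2, ((hv' i).1 _).1.ne']
    have hsuppT : ({i | v i ≠ 0} : Finset (Fin n)) = T := by ext i; simp [hsupp]
    refine ⟨⟨fun i => ?_, fun i hi => ?_, hsuppT ▸ hTd⟩, hsuppT⟩
    · by_cases hi : i ∈ T
      · exact ((hv' i).1 hi).2.2
      · simp [(hv' i).2 hi, hm i]
    · have hi := (hsupp i).1 hi
      exact ⟨hT hi, ((hv' i).1 hi).2.1⟩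

lemma card_admissibleRankVecs (hm : ∀ i, 0 < m i) (S : Finset (Fin n)) (d k : ℕ) :
    #(admissibleRankVecs m S d k) = psi m d S k := by
  rw [card_eq_sum_card_fiberwise (f := fun v => ({i | v i ≠ 0} : Finset (Fin n)))
    (t := S.powerset.filter fun T : Finset (Fin n) => #T ≤ d)]
  · refine sum_congr rfl fun T hT => ?_
    rw [Finset.mem_filter, mem_powerset] at hT
    rw [filter_admissibleRankVecs_support_eq hT.1 hT.2 hm, Fintype.card_piFinset]
    simp [apply_ite, prod_ite_mem]
  · intro v hv
    obtain ⟨-, hv, hvd⟩ := mem_admissibleRankVecs.1 hv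
    simp only [coe_filter, mem_powerset]
    exact ⟨fun i hi => (hv i (by simpa using hi)).1, hvd⟩

def LinGame.equivPi (n : ℕ) (m : Fin n → ℕ) :
    LinGame n m ≃ (Fin n → LinearOrderRel (Profile n m)) where
  toFun g i := ⟨g.pref i, g.total i, g.trans i, g.antisymm i⟩
  invFun h := ⟨fun i => (h i).1, fun i => (h i).2.1, fun i => (h i).2.2.1, fun i => (h i).2.2.2⟩

lemma LinGame.nat_card_eq :
    Nat.card (LinGame n m) = Fintype.card (LinearOrderRel (Profile n m)) ^ n := by
  simp [Nat.card_congr (LinGame.equivPi n m), Nat.card_eq_fintype_card]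

lemma LinGame.rank_eq_one_add_numPreferred (g : LinGame n m) (i : Fin n) (a : Profile n m) :
    g.rank i a = 1 + (LinGame.equivPi n m g i).numPreferred (Function.update a i) (a i) := by
  simp [LinGame.rank, LinearOrderRel.numPreferred, Nat.card_eq_fintype_card, Fintype.card_subtype,
    LinGame.strict, LinearOrderRel.strict, LinGame.equivPi]

lemma qcond_iff_isAdmissibleRankVec (g : LinGame n m) (d : ℕ) (S : Finset (Fin n)) (k : ℕ)
    (a : Profile n m) :
    Qcond g d S k a ↔ IsAdmissibleRankVec S d k
      (fun i => (LinGame.equivPi n m g i).numPreferred (Function.update a i) (a i)) := by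
  have h1 : ∀ c : ℕ, 1 + c ≠ 1 ↔ c ≠ 0 := by omega
  have h2 : ∀ c : ℕ, 1 + c ≤ k ↔ c < k := by omega
  simp only [Qcond, IsAdmissibleRankVec, Nat.card_eq_fintype_card, Fintype.card_subtype,
    LinGame.rank_eq_one_add_numPreferred, h1, h2]

lemma card_qcond_eq (hm : ∀ i, 0 < m i) (d : ℕ) (S : Finset (Fin n)) (k : ℕ) (a : Profile n m) :
    (Nat.card {g : LinGame n m // Qcond g d S k a} : ℝ) =
      psi m d S k * Fintype.card (LinearOrderRel (Profile n m)) ^ n / ∏ i, (m i : ℝ) := by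
  let rk : ∀ i, LinearOrderRel (Profile n m) → ℕ :=
    fun i r => r.numPreferred (Function.update a i) (a i)
  have hcount : Nat.card {g : LinGame n m // Qcond g d S k a} =
      ∑ v ∈ admissibleRankVecs m S d k, ∏ i, #{r | rk i r = v i} := by
    rw [Nat.card_congr ((LinGame.equivPi n m).subtypeEquiv
        (q := fun h => IsAdmissibleRankVec S d k fun i => rk i (h i))
        fun g => qcond_iff_isAdmissibleRankVec g d S k a),
      Nat.card_eq_fintype_card, Fintype.card_subtype]
    convert card_filter_pi_mem_eq_sum_prod rk (admissibleRankVecs m S d k) using 2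
    ext h
    simp only [Finset.mem_filter, mem_univ, true_and, mem_admissibleRankVecs, iff_and_self]
    exact fun _ i => by simpa using (h i).numPreferred_lt_card (u := Function.update a i) (a i)
  have hfiber : ∀ v ∈ admissibleRankVecs m S d k, ∀ i,
      (#{r | rk i r = v i} : ℝ) = Fintype.card (LinearOrderRel (Profile n m)) / m i := by
    intro v hv i
    have := LinearOrderRel.card_mul_card_numPreferred_eq (Function.update_injective a i) (a i)
      (t := v i) (by simpa using (mem_admissibleRankVecs.1 hv).1 i)
    rw [eq_div_iff (by exact_mod_cast (hm i).ne')]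
    simpa [mul_comm] using congrArg (Nat.cast (R := ℝ)) this
  push_cast [hcount]
  rw [sum_congr rfl fun v hv => prod_congr rfl fun i _ => hfiber v hv i, sum_const,
    card_admissibleRankVecs hm, prod_div_distrib]
  simp [mul_div_assoc]

lemma echi_eq (hm : ∀ i, 0 < m i) (d : ℕ) (S : Finset (Fin n)) (k : ℕ) (a : Profile n m) :
    Echi n m d S k a = (∏ i, (1 : ℝ) / m i) * psi m d S k := by
  have hC : (Fintype.card (LinearOrderRel (Profile n m)) : ℝ) ≠ 0 := by
    exact_mod_cast Fintype.card_ne_zero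
  rw [Echi, card_qcond_eq hm, LinGame.nat_card_eq, prod_div_distrib, prod_const_one]
  push_cast
  field_simp

theorem stmt11_general (n : ℕ) (m : Fin n → ℕ) (hm : ∀ i, 2 ≤ m i)
    (S : Finset (Fin n)) (d : ℕ) (k : ℕ) :
    (∀ a : Profile n m,
      Echi n m d S k a = (∏ i, (1 : ℝ) / (m i : ℝ)) * (psi m d S k : ℝ)) ∧
    (∑ a : Profile n m, Echi n m d S k a = (psi m d S k : ℝ)) := by
  have hm_pos : ∀ i, 0 < m i := fun i => two_pos.trans_le (hm i)
  refine ⟨echi_eq hm_pos d S k, ?_⟩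
  have hm_ne : ∀ i, (m i : ℝ) ≠ 0 := fun i => by exact_mod_cast (hm_pos i).ne'
  simp only [echi_eq hm_pos, sum_const, card_univ, Fintype.card_pi, Fintype.card_fin, nsmul_eq_mul,
    Nat.cast_prod, ← mul_assoc, ← prod_mul_distrib, mul_one_div_cancel (hm_ne _), prod_const_one,
    one_mul]

/-- `E[χ_a] = ζ({1,…,n},d,S,k) = (∏_i 1/m_i)·ψ(d,S,k)` for every
profile `a`, and consequently `E[N(d,S,k)] = Σ_a E[χ_a] = ψ(d,S,k)`. -/
theorem stmt11 (n : ℕ) (hn : 1 ≤ n) (m : Fin n → ℕ) (hm : ∀ i, 2 ≤ m i)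
    (S : Finset (Fin n)) (d : ℕ) (hd : d ≤ S.card) (k : ℕ) (hk : 1 ≤ k) :
    (∀ a : Profile n m,
      Echi n m d S k a = (∏ i, (1 : ℝ) / (m i : ℝ)) * (psi m d S k : ℝ)) ∧
    (∑ a : Profile n m, Echi n m d S k a = (psi m d S k : ℝ)) :=
  stmt11_general n m hm S d k

end RandomGames
end

section
/- Let G be a game drawn uniformly at random from G_{n,m}, and fix S ⊆ {1,…,n}, 0 ≤ d ≤ |S|, and an integer k ≥ 1. Then c_1(d,S,k) + c_2(d,S,k) ≤ ( n + 4·Σ_{i∈S} (min{k, m_i} − 1)² ) · ( max_{1≤j≤n} m_j / ∏_{j=1}^n m_j ) · ψ(d,S,k)². -/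
/-!
Write `M = ∏ m_i`. Agent `i`'s rank at `a` depends only on its order on the line `L_a^i`, and
pulling the orders back along permutations of the profiles that map each line onto itself moves
the ranks at `a` to any chosen points `(x_i, a_{-i})`, from which `x` is recovered. Double counting over
the `M` choices of `x` shows that the rank vector at `a` lies in a set `R` with probability at
most `|R| / M`. For two distinct profiles `a, a'` of the line `L_a^{i₀}` the same works with
pairs `(x, y)` such that `x_{i₀} ≠ y_{i₀}`, at least half of all `M²` pairs, giving
probability at most `2 |R| |R'| / M²` for the pair of rank vectors.

`Q(d,S,k)` holds at `a` only if the rank vector lies in a set of at most `ψ` vectors, so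
`E[χ_a] ≤ ψ / M`. Agent `i₀` cannot be 1-satisficed at both `a` and `a'`, so one of the two
rank vectors lies in the subset of vectors with `i₀`-th entry `≠ 1`, of size at most
`(min{k, m_{i₀}} − 1) ψ` and empty unless `i₀ ∈ S`; hence
`E[χ_a χ_{a'}] ≤ 4 (min{k, m_{i₀}} − 1) ψ² / M²`. Summing over the at most `m_i ≤ max_j m_j`
points of each of the `n` lines through each of the `M` profiles gives the bound.
-/

open scoped Classical

theorem Equiv.swap_preimage_eq_of_mem_iff {β : Type*} [DecidableEq β] {x y : β} {s : Set β}
    (h : x ∈ s ↔ y ∈ s) : Equiv.swap x y ⁻¹' s = s := by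
  ext c
  simp only [Set.mem_preimage, Equiv.swap_apply_def]
  split_ifs with hx hy
  · exact hx ▸ h.symm
  · exact hy ▸ h
  · rfl

theorem Equiv.exists_perm_apply_eq_apply_eq {β : Type*} [DecidableEq β] {u v a a' : β}
    (huv : u ≠ v) (haa' : a ≠ a') :
    ∃ σ : Equiv.Perm β, σ u = a ∧ σ v = a' ∧
      ∀ s : Set β, (u ∈ s ↔ a ∈ s) → (v ∈ s ↔ a' ∈ s) → σ ⁻¹' s = s := by
  set v' := Equiv.swap u a v
  have hav' : a ≠ v' := by
    intro h
    apply huv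
    simpa only [Equiv.swap_apply_right, v', Equiv.swap_apply_self] using congrArg (Equiv.swap u a) h
  refine ⟨(Equiv.swap u a).trans (Equiv.swap v' a'), ?_, ?_, fun s hu hv => ?_⟩
  · simp only [Equiv.trans_apply, Equiv.swap_apply_left]
    exact Equiv.swap_apply_of_ne_of_ne hav' haa'
  · exact Equiv.swap_apply_left v' a'
  · have hs : Equiv.swap u a ⁻¹' s = s := Equiv.swap_preimage_eq_of_mem_iff hu
    have hv' : v' ∈ s ↔ a' ∈ s := (Set.ext_iff.mp hs v).trans hv
    rw [Equiv.coe_trans, Set.preimage_comp, Equiv.swap_preimage_eq_of_mem_iff hv', hs]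

theorem Set.ncard_preimage_mul_card_le {G P Z : Type*} [Finite G] (s : G → Z) (R : Finset Z)
    (act : P → G → G) (hact : ∀ x, Function.Injective (act x))
    (hrec : ∀ x₁ x₂ g₁ g₂, s g₁ = s g₂ → act x₁ g₁ = act x₂ g₂ → x₁ = x₂) :
    {g | s g ∈ R}.ncard * Nat.card P ≤ R.card * Nat.card G := by
  rw [← Nat.card_coe_set_eq, ← Nat.card_prod, ← Nat.card_eq_finsetCard, ← Nat.card_prod]
  refine Nat.card_le_card_of_injective (fun p => (⟨s p.1, p.1.2⟩, act p.2 p.1)) ?_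
  rintro ⟨⟨g₁, hg₁⟩, x₁⟩ ⟨⟨g₂, hg₂⟩, x₂⟩ h
  simp only [Prod.mk.injEq, Subtype.mk.injEq] at h
  obtain rfl := hrec x₁ x₂ g₁ g₂ h.1 h.2
  obtain rfl := hact x₁ h.2
  rfl

theorem Nat.cast_div_le_cast_div_of_mul_le_mul {K : Type*} [Field K] [LinearOrder K]
    [IsStrictOrderedRing K] {e g r M : ℕ} (hM : 0 < M) (h : e * M ≤ r * g) :
    (e : K) / g ≤ r / M := by
  rcases g.eq_zero_or_pos with rfl | hg
  · simp only [Nat.cast_zero, div_zero]; positivity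
  · rw [div_le_div_iff₀ (by exact_mod_cast hg) (by exact_mod_cast hM)]
    exact_mod_cast h

theorem mul_div_sq_self {K : Type*} [Field K] (x y : K) : x * (y / x ^ 2) = y / x := by
  rcases eq_or_ne x 0 with rfl | hx
  · simp
  · field_simp

theorem Fintype.card_pi_sq_le_two_mul_card_ne {ι : Type*} [DecidableEq ι] [Fintype ι]
    {β : ι → Type*} [∀ i, Fintype (β i)] [∀ i, DecidableEq (β i)] {i₀ : ι} {c₀ c₁ : β i₀}
    (hc : c₀ ≠ c₁) :
    Fintype.card (∀ i, β i) ^ 2 ≤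
      2 * Fintype.card {p : (∀ i, β i) × (∀ i, β i) // p.1 i₀ ≠ p.2 i₀} := by
  set other : β i₀ → β i₀ := fun c => if c = c₀ then c₁ else c₀
  have hother : ∀ c, c ≠ other c := fun c => by
    by_cases h : c = c₀ <;> simp only [other, h, if_true, if_false] <;> tauto
  -- resetting the `i₀`-th coordinate of the second point injects the diagonal into its complement
  have hdiag : Fintype.card {p : (∀ i, β i) × (∀ i, β i) // p.1 i₀ = p.2 i₀} ≤
      Fintype.card {p : (∀ i, β i) × (∀ i, β i) // p.1 i₀ ≠ p.2 i₀} := by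
    refine Fintype.card_le_of_injective
      (fun p => ⟨(p.1.1, Function.update p.1.2 i₀ (other (p.1.1 i₀))), by simpa using hother _⟩) ?_
    rintro ⟨⟨x, y⟩, h⟩ ⟨⟨x', y'⟩, h'⟩ hp
    simp only [Subtype.mk.injEq, Prod.mk.injEq] at hp h h' ⊢
    obtain ⟨rfl, hy⟩ := hp
    refine ⟨rfl, funext fun j => ?_⟩
    by_cases hj : j = i₀
    · subst hj; exact h.symm.trans h'
    · simpa [Function.update_of_ne hj] using congrFun hy j
  rw [Fintype.card_subtype_compl, Fintype.card_prod] at hdiag ⊢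
  have := Fintype.card_subtype_le fun p : (∀ i, β i) × (∀ i, β i) => p.1 i₀ = p.2 i₀
  rw [Fintype.card_prod] at this
  rw [sq]; omega

namespace RandomGames

variable {n : ℕ} {m : Fin n → ℕ}

-- `line i a` is the paper's `L_a^i`.
def line (i : Fin n) (a : Profile n m) : Set (Profile n m) := {c | ∀ j, j ≠ i → c j = a j}

theorem line_eq_range_update (i : Fin n) (a : Profile n m) :
    line i a = Set.range (Function.update a i) := by
  ext c
  refine ⟨fun hc => ⟨c i, ?_⟩, ?_⟩
  · exact (Function.eq_update_iff.mpr ⟨rfl, hc⟩).symm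
  · rintro ⟨x, rfl⟩ j hj
    exact Function.update_of_ne hj x a

theorem update_mem_line (i : Fin n) (a : Profile n m) (x : Fin (m i)) :
    Function.update a i x ∈ line i a := by
  rw [line_eq_range_update]; exact ⟨x, rfl⟩

theorem self_mem_line (i : Fin n) (a : Profile n m) : a ∈ line i a := fun _ _ => rfl

theorem mem_line_iff_of_mem {i : Fin n} {a b c : Profile n m} (hc : c ∈ line i b) :
    c ∈ line i a ↔ b ∈ line i a :=
  forall₂_congr fun j hj => by rw [hc j hj]

theorem line_eq_of_mem {i : Fin n} {a c : Profile n m} (hc : c ∈ line i a) :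
    line i c = line i a := by
  ext b
  exact forall₂_congr fun j hj => by rw [hc j hj]

theorem apply_ne_of_mem_line_of_ne {i : Fin n} {a a' : Profile n m} (ha' : a' ∈ line i a)
    (hne : a' ≠ a) : a' i ≠ a i := by
  refine fun h => hne (funext fun j => ?_)
  by_cases hj : j = i
  · subst hj; exact h
  · exact ha' j hj

theorem sum_ite_sameLine_le (f : Profile n m → ℝ) (hf : ∀ c, 0 ≤ f c) (a : Profile n m) :
    ∑ a', (if sameLine a a' then f a' else 0) ≤
      ∑ i, ∑ x : Fin (m i), f (Function.update a i x) := by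
  have hline : ∀ i, ∑ a', (if a' ∈ line i a then f a' else 0) =
      ∑ x, f (Function.update a i x) := by
    intro i
    have himage : Finset.univ.filter (· ∈ line i a) =
        Finset.univ.image (Function.update a i) := by
      ext c; simp [line_eq_range_update]
    rw [← Finset.sum_filter, himage,
      Finset.sum_image fun x _ y _ h => Function.update_injective a i h]
  calc _ ≤ ∑ a', ∑ i, (if a' ∈ line i a then f a' else 0) := Finset.sum_le_sum fun a' _ => by
        split_ifs with h
        · obtain ⟨i, hi⟩ := h
          exact (if_pos hi).symm.trans_le <| Finset.single_le_sum
            (f := fun i => if a' ∈ line i a then f a' else 0)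
            (fun j _ => ite_nonneg (hf a') le_rfl) (Finset.mem_univ i)
        · exact Finset.sum_nonneg fun j _ => ite_nonneg (hf a') le_rfl
    _ = _ := by rw [Finset.sum_comm]; exact Finset.sum_congr rfl fun i _ => hline i

theorem sum_profile_const (c : ℝ) : ∑ _a : Profile n m, c = (∏ i, (m i : ℝ)) * c := by
  simp [Fintype.card_pi]

theorem exists_perm_update_eq_update_eq {i₀ : Fin n} {a a' : Profile n m}
    (ha' : a' ∈ line i₀ a) (hne : a' ≠ a) {x y : ∀ i, Fin (m i)} (hxy : x i₀ ≠ y i₀)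
    (i : Fin n) :
    ∃ σ : Equiv.Perm (Profile n m), σ (Function.update a i (x i)) = a ∧
      σ (Function.update a' i (y i)) = a' ∧
      σ ⁻¹' line i a = line i a ∧ σ ⁻¹' line i a' = line i a' := by
  have hu := update_mem_line i a (x i)
  have hv := update_mem_line i a' (y i)
  have huv : Function.update a i (x i) ≠ Function.update a' i (y i) := by
    intro h
    have h₀ := congrFun h i₀
    by_cases hi : i₀ = i
    · subst hi; simp only [Function.update_self] at h₀; exact hxy h₀
    · simp only [Function.update_of_ne hi] at h₀
      exact apply_ne_of_mem_line_of_ne ha' hne h₀.symm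
  obtain ⟨σ, hσu, hσv, hσ⟩ := Equiv.exists_perm_apply_eq_apply_eq huv hne.symm
  exact ⟨σ, hσu, hσv, hσ _ (iff_of_true hu (self_mem_line i a)) (mem_line_iff_of_mem hv),
    hσ _ (mem_line_iff_of_mem hu) (iff_of_true hv (self_mem_line i a'))⟩

namespace LinGame

theorem ext_pref {g g' : LinGame n m} (h : g.pref = g'.pref) : g = g' := by
  cases g; cases g'; cases h; rfl

instance : Finite (LinGame n m) := Finite.of_injective pref fun _ _ => ext_pref

theorem strict_irrefl (g : LinGame n m) (i : Fin n) (a : Profile n m) : ¬ g.strict i a a :=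
  fun h => h.2 h.1

theorem strict_trans (g : LinGame n m) {i : Fin n} {a b c : Profile n m}
    (hab : g.strict i a b) (hbc : g.strict i b c) : g.strict i a c :=
  ⟨g.trans i a b c hab.1 hbc.1, fun hca => hab.2 (g.trans i b c a hbc.1 hca)⟩

theorem strict_or_strict_of_ne (g : LinGame n m) (i : Fin n) {a b : Profile n m}
    (h : a ≠ b) : g.strict i a b ∨ g.strict i b a := by
  by_contra! hn
  rcases g.total i a b with hab | hba
  · exact h (g.antisymm i a b hab (not_not.mp fun hba => hn.1 ⟨hab, hba⟩))
  · exact h (g.antisymm i a b (not_not.mp fun hab => hn.2 ⟨hba, hab⟩) hba)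

theorem rank_eq_ncard (g : LinGame n m) (i : Fin n) (c : Profile n m) :
    g.rank i c = 1 + {y | y ∈ line i c ∧ g.strict i y c}.ncard := by
  have himage : {y | y ∈ line i c ∧ g.strict i y c} =
      Function.update c i '' {x | g.strict i (Function.update c i x) c} := by
    ext y
    rw [line_eq_range_update]
    constructor
    · rintro ⟨⟨x, rfl⟩, h⟩; exact ⟨x, h, rfl⟩
    · rintro ⟨x, h, rfl⟩; exact ⟨⟨x, rfl⟩, h⟩
  rw [himage, Set.ncard_image_of_injective _ (Function.update_injective c i)]
  rfl

theorem rank_le (g : LinGame n m) (i : Fin n) (c : Profile n m) : g.rank i c ≤ m i := by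
  have := Fintype.card_subtype_lt (p := fun x => g.strict i (Function.update c i x) c)
    (x := c i) (by simpa using g.strict_irrefl i c)
  rw [rank, Nat.card_eq_fintype_card]
  simp only [Fintype.card_fin] at this
  omega

theorem rank_lt_rank_of_strict (g : LinGame n m) {i : Fin n} {a c c' : Profile n m}
    (hc : c ∈ line i a) (hc' : c' ∈ line i a) (h : g.strict i c c') :
    g.rank i c < g.rank i c' := by
  rw [rank_eq_ncard, rank_eq_ncard, line_eq_of_mem hc, line_eq_of_mem hc', add_lt_add_iff_left]
  have hsub : {y | y ∈ line i a ∧ g.strict i y c} ⊆ {y | y ∈ line i a ∧ g.strict i y c'} :=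
    fun y hy => ⟨hy.1, g.strict_trans hy.2 h⟩
  exact Set.ncard_lt_ncard <|
    (Set.ssubset_iff_of_subset hsub).2 ⟨c, ⟨hc, h⟩, fun hc => g.strict_irrefl i c hc.2⟩

theorem rank_injOn_line (g : LinGame n m) (i : Fin n) (a : Profile n m) :
    Set.InjOn (g.rank i) (line i a) := by
  intro c hc c' hc' h
  by_contra hne
  rcases g.strict_or_strict_of_ne i hne with hs | hs
  · exact (g.rank_lt_rank_of_strict hc hc' hs).ne h
  · exact (g.rank_lt_rank_of_strict hc' hc hs).ne h.symm

def comap (g : LinGame n m) (σ : Fin n → Equiv.Perm (Profile n m)) : LinGame n m where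
  pref i x y := g.pref i (σ i x) (σ i y)
  total i _ _ := g.total i _ _
  trans i _ _ _ := g.trans i _ _ _
  antisymm i _ _ hxy hyx := (σ i).injective (g.antisymm i _ _ hxy hyx)

theorem comap_injective (σ : Fin n → Equiv.Perm (Profile n m)) :
    Function.Injective fun g : LinGame n m => g.comap σ := by
  intro g g' h
  refine ext_pref (funext fun i => funext fun x => funext fun y => ?_)
  simpa [comap] using
    congrFun (congrFun (congrFun (congrArg pref h) i) ((σ i).symm x)) ((σ i).symm y)

theorem rank_comap (g : LinGame n m) {σ : Fin n → Equiv.Perm (Profile n m)} {i : Fin n}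
    {a c : Profile n m} (hσ : σ i ⁻¹' line i a = line i a) (hc : c ∈ line i a) :
    (g.comap σ).rank i c = g.rank i (σ i c) := by
  have hσc : σ i c ∈ line i a := (Set.ext_iff.mp hσ c).mpr hc
  rw [rank_eq_ncard, rank_eq_ncard, line_eq_of_mem hc, line_eq_of_mem hσc]
  have hpre : {y | y ∈ line i a ∧ (g.comap σ).strict i y c} =
      σ i ⁻¹' {z | z ∈ line i a ∧ g.strict i z (σ i c)} := by
    ext y
    exact and_congr (Set.ext_iff.mp hσ y).symm Iff.rfl
  rw [hpre, Set.ncard_preimage_of_injective_subset_range (σ i).injective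
    ((σ i).surjective.range_eq ▸ Set.subset_univ _)]

theorem update_eq_of_rank_comap_eq (g : LinGame n m) {σ : Fin n → Equiv.Perm (Profile n m)}
    {i : Fin n} {a : Profile n m} {x x' : Fin (m i)}
    (h : (g.comap σ).rank i (Function.update a i x) = (g.comap σ).rank i (Function.update a i x')) :
    x = x' :=
  Function.update_injective a i <|
    (g.comap σ).rank_injOn_line i a (update_mem_line i a x) (update_mem_line i a x') h

noncomputable def ranks (g : LinGame n m) (a : Profile n m) : Fin n → ℕ := fun i => g.rank i a

end LinGame

theorem ncard_ranks_mem_mul_le (a : Profile n m) (R : Finset (Fin n → ℕ)) :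
    {g : LinGame n m | g.ranks a ∈ R}.ncard * ∏ i, m i ≤ R.card * Nat.card (LinGame n m) := by
  set σ : (∀ i, Fin (m i)) → Fin n → Equiv.Perm (Profile n m) :=
    fun x i => Equiv.swap (Function.update a i (x i)) a
  have hrank : ∀ (g : LinGame n m) x i,
      (g.comap (σ x)).rank i (Function.update a i (x i)) = g.rank i a := by
    intro g x i
    rw [g.rank_comap (Equiv.swap_preimage_eq_of_mem_iff
      (iff_of_true (update_mem_line i a _) (self_mem_line i a))) (update_mem_line i a _)]
    simp only [σ, Equiv.swap_apply_left]
  have key := Set.ncard_preimage_mul_card_le (fun g : LinGame n m => g.ranks a) R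
    (fun x g => g.comap (σ x)) (fun x => LinGame.comap_injective (σ x))
    fun x₁ x₂ g₁ g₂ hr hg => funext fun i => g₁.update_eq_of_rank_comap_eq <| by
      rw [hrank, hg, hrank]; exact congrFun hr i
  simpa [Nat.card_pi] using key

theorem ncard_ranks_mem_pair_mul_le {i₀ : Fin n} {a a' : Profile n m} (ha' : a' ∈ line i₀ a)
    (hne : a' ≠ a) (R R' : Finset (Fin n → ℕ)) :
    {g : LinGame n m | g.ranks a ∈ R ∧ g.ranks a' ∈ R'}.ncard * (∏ i, m i) ^ 2 ≤
      2 * (R.card * R'.card) * Nat.card (LinGame n m) := by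
  let P := {p : (∀ i, Fin (m i)) × (∀ i, Fin (m i)) // p.1 i₀ ≠ p.2 i₀}
  have hP : (∏ i, m i) ^ 2 ≤ 2 * Nat.card P := by
    simpa [Nat.card_eq_fintype_card, P] using
      Fintype.card_pi_sq_le_two_mul_card_ne (β := fun i => Fin (m i))
        (apply_ne_of_mem_line_of_ne ha' hne).symm
  choose σ hσu hσv hσ hσ' using fun (p : P) => exists_perm_update_eq_update_eq ha' hne p.2
  have hrank : ∀ (g : LinGame n m) (p : P) i,
      (g.comap (σ p)).rank i (Function.update a i (p.1.1 i)) = g.rank i a ∧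
      (g.comap (σ p)).rank i (Function.update a' i (p.1.2 i)) = g.rank i a' := fun g p i =>
    ⟨by rw [g.rank_comap (hσ p i) (update_mem_line i a _), hσu],
      by rw [g.rank_comap (hσ' p i) (update_mem_line i a' _), hσv]⟩
  have key := Set.ncard_preimage_mul_card_le (fun g : LinGame n m => (g.ranks a, g.ranks a'))
    (R ×ˢ R') (fun p g => g.comap (σ p)) (fun p => LinGame.comap_injective (σ p))
    fun p₁ p₂ g₁ g₂ hr hg => by
      simp only [Prod.mk.injEq] at hr
      refine Subtype.ext (Prod.ext (funext fun i => ?_) (funext fun i => ?_))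
      · refine g₁.update_eq_of_rank_comap_eq (σ := σ p₁) (a := a) ?_
        rw [(hrank g₁ p₁ i).1, hg, (hrank g₂ p₂ i).1]; exact congrFun hr.1 i
      · refine g₁.update_eq_of_rank_comap_eq (σ := σ p₁) (a := a') ?_
        rw [(hrank g₁ p₁ i).2, hg, (hrank g₂ p₂ i).2]; exact congrFun hr.2 i
  simp only [Finset.mem_product, Finset.card_product] at key
  calc _ ≤ {g : LinGame n m | g.ranks a ∈ R ∧ g.ranks a' ∈ R'}.ncard * (2 * Nat.card P) :=
        Nat.mul_le_mul_left _ hP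
    _ ≤ 2 * (R.card * R'.card) * Nat.card (LinGame n m) := by linarith

noncomputable def admissibleRanks (m : Fin n → ℕ) (d : ℕ) (S : Finset (Fin n)) (k : ℕ) :
    Finset (Fin n → ℕ) :=
  (Fintype.piFinset fun i => Finset.Icc 1 (m i)).filter fun r =>
    (∀ i, r i ≠ 1 → i ∈ S ∧ r i ≤ k) ∧ Nat.card {i // r i ≠ 1} ≤ d

section admissibleRanks

variable {d k : ℕ} {S : Finset (Fin n)}

theorem ranks_mem_admissibleRanks {g : LinGame n m} {a : Profile n m} (h : Qcond g d S k a) :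
    g.ranks a ∈ admissibleRanks m d S k := by
  simp only [admissibleRanks, Finset.mem_filter, Fintype.mem_piFinset, Finset.mem_Icc]
  exact ⟨fun i => ⟨Nat.le_add_right 1 _, g.rank_le i a⟩, h⟩

/-- Sorting the admissible vectors by their set of coordinates different from `1` gives
the sum over `T` defining `ψ`. -/
theorem card_admissibleRanks_le : (admissibleRanks m d S k).card ≤ psi m d S k := by
  let box : Finset (Fin n) → Finset (Fin n → ℕ) := fun T =>
    Fintype.piFinset fun i => if i ∈ T then Finset.Icc 2 (min k (m i)) else {1}
  have hsub : admissibleRanks m d S k ⊆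
      (S.powerset.filter fun T => T.card ≤ d).biUnion box := by
    intro r hr
    simp only [admissibleRanks, Finset.mem_filter, Fintype.mem_piFinset, Finset.mem_Icc] at hr
    obtain ⟨hbound, hS, hd⟩ := hr
    refine Finset.mem_biUnion.2 ⟨Finset.univ.filter fun i => r i ≠ 1, ?_, ?_⟩
    · simp only [Finset.mem_filter, Finset.mem_powerset]
      refine ⟨fun i hi => (hS i (Finset.mem_filter.1 hi).2).1, ?_⟩
      rwa [Nat.card_eq_fintype_card, Fintype.card_subtype] at hd
    · simp only [box, Fintype.mem_piFinset, Finset.mem_filter, Finset.mem_univ, true_and]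
      intro i
      split_ifs with hi
      · have := hbound i
        have := (hS i hi).2
        rw [Finset.mem_Icc]
        omega
      · simpa using hi
  calc _ ≤ _ := Finset.card_le_card hsub
    _ ≤ _ := Finset.card_biUnion_le
    _ = psi m d S k := Finset.sum_congr rfl fun T _ => by
        simp only [box, Fintype.card_piFinset, apply_ite Finset.card, Nat.card_Icc,
          Finset.card_singleton]
        rw [Finset.prod_ite_mem, Finset.univ_inter]
        exact Finset.prod_congr rfl fun i _ => by omega

theorem filter_admissibleRanks_ne_one_eq_empty {i₀ : Fin n} (hi₀ : i₀ ∉ S) :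
    (admissibleRanks m d S k).filter (fun r => r i₀ ≠ 1) = ∅ := by
  simp only [admissibleRanks, Finset.filter_filter, Finset.filter_eq_empty_iff]
  exact fun r _ h => hi₀ (h.1.1 i₀ h.2).1

theorem update_one_mem_admissibleRanks {r : Fin n → ℕ} (hr : r ∈ admissibleRanks m d S k)
    (i₀ : Fin n) : Function.update r i₀ 1 ∈ admissibleRanks m d S k := by
  simp only [admissibleRanks, Finset.mem_filter, Fintype.mem_piFinset, Finset.mem_Icc] at hr ⊢
  obtain ⟨hbound, hS, hd⟩ := hr
  refine ⟨fun i => ?_, fun i hi => ?_, le_trans ?_ hd⟩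
  · by_cases hi : i = i₀
    · subst hi; have := hbound i; simp only [Function.update_self]; omega
    · simpa [Function.update_of_ne hi] using hbound i
  · have hi₀ : i ≠ i₀ := by rintro rfl; simp at hi
    rw [Function.update_of_ne hi₀] at hi ⊢
    exact hS i hi
  · rw [Nat.card_eq_fintype_card, Nat.card_eq_fintype_card]
    refine Fintype.card_subtype_mono _ _ fun i hi => ?_
    by_cases hi₀ : i = i₀
    · subst hi₀; simp at hi
    · rwa [Function.update_of_ne hi₀] at hi

theorem card_filter_admissibleRanks_ne_one_le (i₀ : Fin n) :
    ((admissibleRanks m d S k).filter (fun r => r i₀ ≠ 1)).card ≤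
      (min k (m i₀) - 1) * (admissibleRanks m d S k).card := by
  have h := Finset.card_le_card_of_injOn
    (s := (admissibleRanks m d S k).filter (fun r => r i₀ ≠ 1))
    (t := Finset.Icc 2 (min k (m i₀)) ×ˢ admissibleRanks m d S k)
    (fun r => (r i₀, Function.update r i₀ 1)) ?_ ?_
  · simpa only [Finset.card_product, Nat.card_Icc, show min k (m i₀) + 1 - 2 = min k (m i₀) - 1
      by omega] using h
  · intro r hr
    rw [Finset.coe_filter] at hr
    obtain ⟨hA, hr₀ : r i₀ ≠ 1⟩ := hr
    refine Finset.mem_coe.2 (Finset.mem_product.2 ⟨?_, update_one_mem_admissibleRanks hA i₀⟩)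
    simp only [admissibleRanks, Finset.mem_filter, Fintype.mem_piFinset, Finset.mem_Icc] at hA
    have := hA.1 i₀
    have := (hA.2.1 i₀ hr₀).2
    rw [Finset.mem_Icc]
    dsimp only
    omega
  · intro r _ r' _ h
    simp only [Prod.mk.injEq] at h
    rw [← Function.update_eq_self i₀ r, ← Function.update_eq_self i₀ r', h.1,
      ← Function.update_idem, h.2, Function.update_idem]

theorem sum_mul_card_filter_admissibleRanks_ne_one_le :
    ∑ i, (m i - 1) * ((admissibleRanks m d S k).filter (fun r => r i ≠ 1)).card ≤
      (∑ i ∈ S, (min k (m i) - 1) ^ 2) * Finset.univ.sup m * psi m d S k := by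
  rw [← Finset.sum_subset (Finset.subset_univ S) fun i _ hi => by
    rw [filter_admissibleRanks_ne_one_eq_empty hi, Finset.card_empty, mul_zero],
    Finset.sum_mul, Finset.sum_mul]
  refine Finset.sum_le_sum fun i _ => ?_
  have hm : m i - 1 ≤ Finset.univ.sup m :=
    (Nat.sub_le _ _).trans (Finset.le_sup (Finset.mem_univ i))
  have hw : min k (m i) - 1 ≤ (min k (m i) - 1) ^ 2 := Nat.le_self_pow two_ne_zero _
  calc (m i - 1) * _ ≤ (m i - 1) * ((min k (m i) - 1) * psi m d S k) :=
        Nat.mul_le_mul_left _ ((card_filter_admissibleRanks_ne_one_le i).trans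
          (Nat.mul_le_mul_left _ card_admissibleRanks_le))
    _ ≤ Finset.univ.sup m * ((min k (m i) - 1) ^ 2 * psi m d S k) :=
        Nat.mul_le_mul hm (Nat.mul_le_mul_right _ hw)
    _ = _ := by ring

theorem Echi_nonneg (a : Profile n m) : 0 ≤ Echi n m d S k a := by
  unfold Echi; positivity

theorem Echi_le (a : Profile n m) : Echi n m d S k a ≤ psi m d S k / ∏ i, (m i : ℝ) := by
  have hM : 0 < ∏ i, m i := Finset.prod_pos fun i _ => (a i).pos
  have hcount : {g | Qcond g d S k a}.ncard * ∏ i, m i ≤ psi m d S k * Nat.card (LinGame n m) :=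
    calc _ ≤ {g : LinGame n m | g.ranks a ∈ admissibleRanks m d S k}.ncard * ∏ i, m i :=
          Nat.mul_le_mul_right _ (Set.ncard_le_ncard fun _ => ranks_mem_admissibleRanks)
      _ ≤ (admissibleRanks m d S k).card * Nat.card (LinGame n m) := ncard_ranks_mem_mul_le a _
      _ ≤ _ := Nat.mul_le_mul_right _ card_admissibleRanks_le
  have := Nat.cast_div_le_cast_div_of_mul_le_mul (K := ℝ) hM hcount
  push_cast at this
  exact this

theorem Echi2_le {i₀ : Fin n} {a a' : Profile n m} (ha' : a' ∈ line i₀ a) (hne : a' ≠ a) :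
    Echi2 n m d S k a a' ≤
      4 * ((admissibleRanks m d S k).filter (fun r => r i₀ ≠ 1)).card * psi m d S k /
        (∏ i, (m i : ℝ)) ^ 2 := by
  set A := admissibleRanks m d S k
  set A₀ := A.filter (fun r => r i₀ ≠ 1)
  have hM : 0 < (∏ i, m i) ^ 2 := pow_pos (Finset.prod_pos fun i _ => (a i).pos) 2
  have hsub : {g | Qcond g d S k a ∧ Qcond g d S k a'} ⊆
      {g : LinGame n m | g.ranks a ∈ A₀ ∧ g.ranks a' ∈ A} ∪
        {g : LinGame n m | g.ranks a ∈ A ∧ g.ranks a' ∈ A₀} := by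
    rintro g ⟨hq, hq'⟩
    -- agent `i₀` is `1`-satisficed at no more than one point of its line
    by_cases h : g.rank i₀ a = 1
    · refine Or.inr ⟨ranks_mem_admissibleRanks hq, Finset.mem_filter.2
        ⟨ranks_mem_admissibleRanks hq', fun h' => hne ?_⟩⟩
      exact g.rank_injOn_line i₀ a ha' (self_mem_line i₀ a) (h'.trans h.symm)
    · exact Or.inl ⟨Finset.mem_filter.2 ⟨ranks_mem_admissibleRanks hq, h⟩,
        ranks_mem_admissibleRanks hq'⟩
  have hcount : {g | Qcond g d S k a ∧ Qcond g d S k a'}.ncard * (∏ i, m i) ^ 2 ≤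
      4 * A₀.card * psi m d S k * Nat.card (LinGame n m) :=
    calc _ ≤ ({g : LinGame n m | g.ranks a ∈ A₀ ∧ g.ranks a' ∈ A}.ncard +
            {g : LinGame n m | g.ranks a ∈ A ∧ g.ranks a' ∈ A₀}.ncard) * (∏ i, m i) ^ 2 :=
          Nat.mul_le_mul_right _ ((Set.ncard_le_ncard hsub).trans (Set.ncard_union_le _ _))
      _ ≤ 2 * (A₀.card * A.card) * Nat.card (LinGame n m) +
            2 * (A.card * A₀.card) * Nat.card (LinGame n m) := by
          rw [add_mul]
          exact add_le_add (ncard_ranks_mem_pair_mul_le ha' hne _ _)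
            (ncard_ranks_mem_pair_mul_le ha' hne _ _)
      _ = 4 * A₀.card * A.card * Nat.card (LinGame n m) := by ring
      _ ≤ _ := by gcongr; exact card_admissibleRanks_le
  have := Nat.cast_div_le_cast_div_of_mul_le_mul (K := ℝ) hM hcount
  push_cast at this
  exact this

theorem c1_le : c1 n m d S k ≤
    n * (Finset.univ.sup m : ℕ) * (psi m d S k : ℝ) ^ 2 / ∏ i, (m i : ℝ) := by
  set K := (psi m d S k : ℝ) / ∏ i, (m i : ℝ)
  have hK : 0 ≤ K := by positivity
  calc c1 n m d S k
      ≤ ∑ a : Profile n m, ∑ i, ∑ x : Fin (m i),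
          Echi n m d S k a * Echi n m d S k (Function.update a i x) :=
        Finset.sum_le_sum fun a _ => sum_ite_sameLine_le _
          (fun _ => mul_nonneg (Echi_nonneg a) (Echi_nonneg _)) a
    _ ≤ ∑ _a : Profile n m, ∑ i, ∑ _x : Fin (m i), K ^ 2 := by
        gcongr with a _ i _ x _
        rw [sq]
        exact mul_le_mul (Echi_le a) (Echi_le _) (Echi_nonneg _) hK
    _ ≤ ∑ _a : Profile n m, ∑ _i : Fin n, (Finset.univ.sup m : ℕ) * K ^ 2 := by
        gcongr with a _ i _
        rw [Finset.sum_const, Finset.card_univ, Fintype.card_fin, nsmul_eq_mul]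
        gcongr
        exact_mod_cast Finset.le_sup (Finset.mem_univ i)
    _ = _ := by
        rw [sum_profile_const, Finset.sum_const, Finset.card_univ, Fintype.card_fin, nsmul_eq_mul,
          div_pow, ← mul_div_sq_self (∏ i, (m i : ℝ))]
        ring

theorem c2_le : c2 n m d S k ≤
    4 * (∑ i ∈ S, ((min k (m i) - 1 : ℕ) : ℝ) ^ 2) * (Finset.univ.sup m : ℕ) *
      (psi m d S k : ℝ) ^ 2 / ∏ i, (m i : ℝ) := by
  set A₀ := fun i => ((admissibleRanks m d S k).filter (fun r => r i ≠ 1)).card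
  set C := fun i => 4 * (A₀ i : ℝ) * psi m d S k / (∏ i, (m i : ℝ)) ^ 2
  have hline : ∀ (a : Profile n m) i, ∑ x : Fin (m i), (if a ≠ Function.update a i x then
      Echi2 n m d S k a (Function.update a i x) else 0) ≤ ((m i - 1 : ℕ) : ℝ) * C i := by
    intro a i
    calc _ ≤ ∑ x : Fin (m i), (if x ≠ a i then C i else 0) := Finset.sum_le_sum fun x _ => by
          by_cases h : x = a i
          · simp [h]
          · have hne : Function.update a i x ≠ a := mt Function.update_eq_self_iff.mp h
            rw [if_pos hne.symm, if_pos h]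
            exact Echi2_le (update_mem_line i a x) hne
      _ = _ := by
          rw [← Finset.sum_filter, Finset.sum_const, Finset.filter_ne', Finset.card_erase_of_mem
            (Finset.mem_univ _), Finset.card_univ, Fintype.card_fin, nsmul_eq_mul]
  calc c2 n m d S k
      ≤ ∑ a : Profile n m, ∑ i, ∑ x : Fin (m i), (if a ≠ Function.update a i x then
          Echi2 n m d S k a (Function.update a i x) else 0) := by
        simp only [c2, ite_and]
        exact Finset.sum_le_sum fun a _ => sum_ite_sameLine_le _
          (fun _ => ite_nonneg (by unfold Echi2; positivity) le_rfl) a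
    _ ≤ ∑ _a : Profile n m, ∑ i, ((m i - 1 : ℕ) : ℝ) * C i := by
        gcongr with a _ i _; exact hline a i
    _ = 4 * ((∑ i, (m i - 1) * A₀ i : ℕ) : ℝ) * psi m d S k / ∏ i, (m i : ℝ) := by
        rw [sum_profile_const, ← mul_div_sq_self (∏ i, (m i : ℝ))]
        congr 1
        push_cast
        rw [Finset.mul_sum, Finset.sum_mul, Finset.sum_div]
        exact Finset.sum_congr rfl fun i _ => by ring
    _ ≤ 4 * (((∑ i ∈ S, (min k (m i) - 1) ^ 2) * Finset.univ.sup m * psi m d S k : ℕ) : ℝ) *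
          psi m d S k / ∏ i, (m i : ℝ) := by
        gcongr
        exact sum_mul_card_filter_admissibleRanks_ne_one_le
    _ = _ := by push_cast; ring

end admissibleRanks

theorem stmt15_general (n : ℕ) (m : Fin n → ℕ)
    (S : Finset (Fin n)) (d : ℕ) (k : ℕ) :
    c1 n m d S k + c2 n m d S k ≤
      ((n : ℝ) + 4 * ∑ i ∈ S, ((min k (m i) - 1 : ℕ) : ℝ) ^ 2) *
        (((Finset.univ.sup m : ℕ) : ℝ) / ∏ j, (m j : ℝ)) * (psi m d S k : ℝ) ^ 2 :=
  (add_le_add c1_le c2_le).trans_eq (by ring)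

/-- `c₁(d,S,k) + c₂(d,S,k) ≤ (n + 4·Σ_{i∈S} (min{k,m_i} − 1)²) ·
(max_j m_j / ∏_j m_j) · ψ(d,S,k)²`. -/
theorem stmt15 (n : ℕ) (hn : 1 ≤ n) (m : Fin n → ℕ) (hm : ∀ i, 2 ≤ m i)
    (S : Finset (Fin n)) (d : ℕ) (hd : d ≤ S.card) (k : ℕ) (hk : 1 ≤ k) :
    c1 n m d S k + c2 n m d S k ≤
      ((n : ℝ) + 4 * ∑ i ∈ S, ((min k (m i) - 1 : ℕ) : ℝ) ^ 2) *
        (((Finset.univ.sup m : ℕ) : ℝ) / ∏ j, (m j : ℝ)) * (psi m d S k : ℝ) ^ 2 :=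
  stmt15_general n m S d k

end RandomGames
end

section
/- In the traveler's dilemma with bound 100, the set of (2,2)-satisficing equilibria (profiles at which both agents are 2-satisficed) is exactly {(x,x) : x ∈ {2,3,…,100}} ∪ {(2,3), (3,2), (2,4), (4,2)}. -/
/-!
Against a claim `b ≥ 3` the unique best reply is `b - 1`, with payoff `b + 1`, and every other
reply earns at most `b`, which `b` itself earns. So an agent is 2-satisficed exactly when its
payoff is at least `b`, i.e. when it claims `b - 2`, `b - 1` or `b`. Against `b = 2` only the
claim `2` does strictly better than anything else, so every claim is 2-satisficed. Imposing
these conditions on both agents leaves the diagonal and `(2,3)`, `(2,4)` with their mirror images.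
-/

namespace TravelersDilemma

/-- Monetary payoff of an agent playing `a` against an opponent playing `b`. -/
def u (a b : ℕ) : ℤ :=
  if a = b then (a : ℤ) else if a < b then (a : ℤ) + 2 else (b : ℤ) - 2

/-- `rank_i((a,b) | ⪰_i) = 1 + |{x ∈ {2,…,100} : u(x,b) > u(a,b)}|`. -/
def rank (a b : ℕ) : ℕ :=
  1 + ((Finset.Icc 2 100).filter fun x => u a b < u x b).card

/-- An agent playing `a` against `b` is 2-satisficed. -/
def sat2 (a b : ℕ) : Prop := rank a b ≤ 2

def betterReplies (a b : ℕ) : Finset ℕ :=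
  (Finset.Icc 2 100).filter fun x => u a b < u x b

lemma mem_betterReplies {a b x : ℕ} :
    x ∈ betterReplies a b ↔ (2 ≤ x ∧ x ≤ 100) ∧ u a b < u x b := by
  rw [betterReplies, Finset.mem_filter, Finset.mem_Icc]

lemma sat2_iff_card_betterReplies_le_one {a b : ℕ} : sat2 a b ↔ (betterReplies a b).card ≤ 1 := by
  unfold sat2 rank betterReplies
  omega

lemma u_self (b : ℕ) : u b b = b := if_pos rfl

lemma u_pred {b : ℕ} (hb : 1 ≤ b) : u (b - 1) b = b + 1 := by
  unfold u
  split_ifs <;> omega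

lemma u_le_of_ne_pred {x b : ℕ} (hx : x ≠ b - 1) : u x b ≤ b := by
  unfold u
  split_ifs <;> omega

lemma le_u_iff {a b : ℕ} : (b : ℤ) ≤ u a b ↔ b ≤ a + 2 ∧ a ≤ b := by
  unfold u
  split_ifs <;> omega

lemma betterReplies_two_subset (a : ℕ) : betterReplies a 2 ⊆ {2} := by
  intro x hx
  rw [mem_betterReplies] at hx
  rw [Finset.mem_singleton]
  unfold u at hx
  split_ifs at hx <;> omega

lemma betterReplies_subset_pred {a b : ℕ} (h : (b : ℤ) ≤ u a b) : betterReplies a b ⊆ {b - 1} := by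
  intro x hx
  rw [Finset.mem_singleton]
  by_contra hne
  have := (mem_betterReplies.mp hx).2
  have := u_le_of_ne_pred hne
  omega

lemma pair_subset_betterReplies {a b : ℕ} (hb : 3 ≤ b) (hb' : b ≤ 100) (h : u a b < b) :
    {b - 1, b} ⊆ betterReplies a b := by
  intro x hx
  rw [Finset.mem_insert, Finset.mem_singleton] at hx
  rw [mem_betterReplies]
  rcases hx with rfl | rfl
  · rw [u_pred (by omega)]
    omega
  · rw [u_self]
    omega

lemma sat2_two (a : ℕ) : sat2 a 2 :=
  sat2_iff_card_betterReplies_le_one.mpr <|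
    (Finset.card_le_card (betterReplies_two_subset a)).trans_eq (Finset.card_singleton 2)

lemma sat2_iff_le_u {a b : ℕ} (hb : 3 ≤ b) (hb' : b ≤ 100) : sat2 a b ↔ (b : ℤ) ≤ u a b := by
  rw [sat2_iff_card_betterReplies_le_one]
  constructor
  · intro hcard
    by_contra! hlt
    have hpair : ({b - 1, b} : Finset ℕ).card = 2 := Finset.card_pair (by omega)
    have := Finset.card_le_card (pair_subset_betterReplies hb hb' hlt)
    omega
  · intro hle
    exact (Finset.card_le_card (betterReplies_subset_pred hle)).trans_eq (Finset.card_singleton _)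

lemma sat2_iff {a b : ℕ} (hb : 2 ≤ b) (hb' : b ≤ 100) :
    sat2 a b ↔ b = 2 ∨ (b ≤ a + 2 ∧ a ≤ b) := by
  rcases hb.eq_or_lt with rfl | hb
  · simp only [sat2_two, true_or]
  · rw [sat2_iff_le_u hb hb', le_u_iff]
    omega

theorem stmt18 :
    ∀ a ∈ Finset.Icc 2 100, ∀ b ∈ Finset.Icc 2 100,
      ((sat2 a b ∧ sat2 b a) ↔
        (a = b ∨ (a = 2 ∧ b = 3) ∨ (a = 3 ∧ b = 2) ∨ (a = 2 ∧ b = 4) ∨ (a = 4 ∧ b = 2))) := by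
  intro a ha b hb
  rw [Finset.mem_Icc] at ha hb
  rw [sat2_iff hb.1 hb.2, sat2_iff ha.1 ha.2]
  omega

end TravelersDilemma
end
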